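/- arXiv:1103.4398 — 9 statements merged into one kernel-verified Lean document; each statement's English description precedes it below -/
import Mathlib

section
/- In the universal enveloping algebra of the 5-dimensional real nilpotent Lie algebra g with basis {X,U,V,E,Z} and nonzero brackets [U,V]=E, [X,U]=V, [X,V]=Z, the element W = 2UZ - V² - 2EX is central, i.e. [g, W] = 0. -/
open UniversalEnvelopingAlgebra

/-!
Commuting with `W` is a linear condition on `ι Y`, so it suffices to check the five basis
vectors. As `⁅a, -⁆` is a derivation,
`⁅a, W⁆ = 2 (⁅a, U⁆ Z + U ⁅a, Z⁆) - (⁅a, V⁆ V + V ⁅a, V⁆) - 2 (⁅a, E⁆ X + E ⁅a, X⁆)`.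
For `a = X` this is `2VZ - ZV - VZ = ⁅V, Z⁆ = 0`, for `a = U` it is `2EV - EV - VE = ⁅E, V⁆ = 0`,
for `a = V` it is `-2EZ + 2EZ = 0`, and `E`, `Z` commute with all the generators.
-/

def casimir {A : Type*} [Ring A] (x u v e z : A) : A :=
  2 * (u * z) - v ^ 2 - 2 * (e * x)

structure GRelations {A : Type*} [Ring A] (x u v e z : A) : Prop where
  uv : ⁅u, v⁆ = e
  xu : ⁅x, u⁆ = v
  xv : ⁅x, v⁆ = z
  xe : Commute x e
  xz : Commute x z
  ue : Commute u e
  uz : Commute u z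
  ve : Commute v e
  vz : Commute v z
  ez : Commute e z

section Ring

variable {A : Type*} [Ring A]

theorem Ring.lie_swap (a b : A) : ⁅a, b⁆ = -⁅b, a⁆ := by
  simp only [Ring.lie_def, neg_sub]

theorem lie_casimir (a x u v e z : A) :
    ⁅a, casimir x u v e z⁆ = 2 * (⁅a, u⁆ * z + u * ⁅a, z⁆) - (⁅a, v⁆ * v + v * ⁅a, v⁆) -
      2 * (⁅a, e⁆ * x + e * ⁅a, x⁆) := by
  simp only [casimir, Ring.lie_def]
  noncomm_ring

theorem commute_casimir_of_commute {a x u v e z : A} (hx : Commute a x) (hu : Commute a u)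
    (hv : Commute a v) (he : Commute a e) (hz : Commute a z) :
    Commute a (casimir x u v e z) := by
  rw [commute_iff_lie_eq, lie_casimir, hx.lie_eq, hu.lie_eq, hv.lie_eq, he.lie_eq, hz.lie_eq]
  simp

namespace GRelations

variable {x u v e z : A}

theorem commute_x_casimir (h : GRelations x u v e z) : Commute x (casimir x u v e z) := by
  rw [commute_iff_lie_eq, lie_casimir, h.xu, h.xv, h.xe.lie_eq, h.xz.lie_eq,
    (Commute.refl x).lie_eq, h.vz.eq]
  noncomm_ring

theorem commute_u_casimir (h : GRelations x u v e z) : Commute u (casimir x u v e z) := by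
  rw [commute_iff_lie_eq, lie_casimir, Ring.lie_swap u x, h.xu, h.uv, h.ue.lie_eq, h.uz.lie_eq,
    (Commute.refl u).lie_eq, h.ve.eq]
  noncomm_ring

theorem commute_v_casimir (h : GRelations x u v e z) : Commute v (casimir x u v e z) := by
  rw [commute_iff_lie_eq, lie_casimir, Ring.lie_swap v x, h.xv, Ring.lie_swap v u, h.uv,
    h.ve.lie_eq, h.vz.lie_eq, (Commute.refl v).lie_eq]
  noncomm_ring

theorem commute_e_casimir (h : GRelations x u v e z) : Commute e (casimir x u v e z) :=
  commute_casimir_of_commute h.xe.symm h.ue.symm h.ve.symm (Commute.refl e) h.ez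

theorem commute_z_casimir (h : GRelations x u v e z) : Commute z (casimir x u v e z) :=
  commute_casimir_of_commute h.xz.symm h.uz.symm h.vz.symm h.ez.symm (Commute.refl z)

end GRelations

end Ring

theorem Module.Basis.commute_of_forall_commute {R M A κ : Type*} [CommSemiring R]
    [AddCommMonoid M] [Module R M] [Semiring A] [Algebra R A] (b : Module.Basis κ R M)
    {F : Type*} [FunLike F M A] [LinearMapClass F R M A] (f : F) {a : A}
    (h : ∀ i, Commute (f (b i)) a) (m : M) : Commute (f m) a := by
  have hspan : Submodule.span R (Set.range b) ≤
      (Subalgebra.centralizer R {a}).toSubmodule.comap (f : M →ₗ[R] A) := by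
    rw [Submodule.span_le]
    rintro _ ⟨i, rfl⟩
    simpa [Set.mem_centralizer_iff] using (h i).symm.eq
  rw [b.span_eq] at hspan
  exact (hspan Submodule.mem_top a rfl).symm

namespace UniversalEnvelopingAlgebra

variable {R L : Type*} [CommRing R] [LieRing L] [LieAlgebra R L]

attribute [local instance] LieRing.ofAssociativeRing

theorem lie_ι_ι {x y z : L} (h : ⁅x, y⁆ = z) : ⁅ι R x, ι R y⁆ = ι R z := by
  rw [← LieHom.map_lie, h]

theorem commute_ι_ι {x y : L} (h : ⁅x, y⁆ = 0) : Commute (ι R x) (ι R y) := by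
  rw [commute_iff_lie_eq, lie_ι_ι h, map_zero]

end UniversalEnvelopingAlgebra

/-- In the universal enveloping algebra of the 5-dimensional real nilpotent Lie algebra `g`
with basis `{X,U,V,E,Z}` and nonzero brackets `[U,V]=E`, `[X,U]=V`, `[X,V]=Z`, the element
`W = 2UZ - V² - 2EX` is central, i.e. `[g, W] = 0`. -/
theorem stmt_0 (L : Type) [LieRing L] [LieAlgebra ℝ L]
    (X U V E Z : L) (b : Module.Basis (Fin 5) ℝ L) (hb : ⇑b = ![X, U, V, E, Z])
    (hUV : ⁅U, V⁆ = E) (hXU : ⁅X, U⁆ = V) (hXV : ⁅X, V⁆ = Z)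
    (hXE : ⁅X, E⁆ = 0) (hXZ : ⁅X, Z⁆ = 0) (hUE : ⁅U, E⁆ = 0) (hUZ : ⁅U, Z⁆ = 0)
    (hVE : ⁅V, E⁆ = 0) (hVZ : ⁅V, Z⁆ = 0) (hEZ : ⁅E, Z⁆ = 0)
    (W : UniversalEnvelopingAlgebra ℝ L)
    (hW : W = 2 * (ι ℝ U * ι ℝ Z) - (ι ℝ V) ^ 2 - 2 * (ι ℝ E * ι ℝ X)) :
    ∀ Y : L, ι ℝ Y * W - W * ι ℝ Y = 0 := by
  have h : GRelations (ι ℝ X) (ι ℝ U) (ι ℝ V) (ι ℝ E) (ι ℝ Z) :=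
    ⟨lie_ι_ι hUV, lie_ι_ι hXU, lie_ι_ι hXV, commute_ι_ι hXE, commute_ι_ι hXZ, commute_ι_ι hUE,
      commute_ι_ι hUZ, commute_ι_ι hVE, commute_ι_ι hVZ, commute_ι_ι hEZ⟩
  have hbasis : ∀ i, Commute (ι ℝ (b i)) W := by
    rw [hb, hW]
    intro i
    fin_cases i
    exacts [h.commute_x_casimir, h.commute_u_casimir, h.commute_v_casimir, h.commute_e_casimir,
      h.commute_z_casimir]
  exact fun Y ↦ (b.commute_of_forall_commute (ι ℝ) hbasis Y).lie_eq
end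

section
/- In the Lie algebra g with basis {X,U,V,E,Z} and brackets [U,V]=E, [X,U]=V, [X,V]=Z, for any linear functional l on g, the coadjoint stabilizer g(l) = {Y ∈ g : l([Y, W]) = 0 for all W ∈ g} of an l with l(E)=1 and l(X)=0 equals span{E, Z} ⊕ ℝ·(X - l(Z)U + l(V)V). -/
/-!
Write `Y = x X + u U + v V + e E + z Z`. Since `E` and `Z` are central,
`l ⁅Y, E⁆ = l ⁅Y, Z⁆ = 0`, and with `l E = 1` the remaining pairings are
`l ⁅Y, U⁆ = x l(V) - v`, `l ⁅Y, V⁆ = x l(Z) + u` and `l ⁅Y, X⁆ = -u l(V) - v l(Z)`;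
the last one vanishes once the first two do. Hence `Y` stabilizes `l` iff `u = -x l(Z)`
and `v = x l(V)`, i.e. iff `Y = e E + z Z + x (X - l(Z) U + l(V) V)`.
-/

open Module

section Stabilizer

variable {R L : Type*} [CommRing R] [LieRing L] [LieAlgebra R L]

def coadjointStabilizer (l : Dual R L) : Submodule R L :=
  LinearMap.ker (LinearMap.llcomp R L L R l ∘ₗ (LieAlgebra.ad R L : L →ₗ[R] Module.End R L))

theorem mem_coadjointStabilizer {l : Dual R L} {Y : L} :
    Y ∈ coadjointStabilizer l ↔ ∀ W, l ⁅Y, W⁆ = 0 := by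
  simp [coadjointStabilizer, LinearMap.ext_iff]

theorem mem_coadjointStabilizer_iff_basis {ι : Type*} (b : Basis ι R L) {l : Dual R L} {Y : L} :
    Y ∈ coadjointStabilizer l ↔ ∀ i, l ⁅Y, b i⁆ = 0 := by
  refine mem_coadjointStabilizer.trans ⟨fun h i => h _, fun h W => ?_⟩
  have : l ∘ₗ LieAlgebra.ad R L Y = 0 := b.ext fun i => by simpa using h i
  simpa using LinearMap.congr_fun this W

end Stabilizer

theorem Module.Basis.exists_eq_five {R M : Type*} [CommRing R] [AddCommGroup M] [Module R M]
    {b : Basis (Fin 5) R M} {X U V E Z : M} (hb : ⇑b = ![X, U, V, E, Z]) (Y : M) :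
    ∃ x u v e z : R, Y = x • X + u • U + v • V + e • E + z • Z := by
  refine ⟨b.repr Y 0, b.repr Y 1, b.repr Y 2, b.repr Y 3, b.repr Y 4, ?_⟩
  conv_lhs => rw [← b.sum_repr Y]
  simp [Fin.sum_univ_five, hb]

section Relations

variable {L : Type*} [LieRing L]

structure BracketRelations (X U V E Z : L) : Prop where
  lie_U_V : ⁅U, V⁆ = E
  lie_X_U : ⁅X, U⁆ = V
  lie_X_V : ⁅X, V⁆ = Z
  lie_X_E : ⁅X, E⁆ = 0
  lie_X_Z : ⁅X, Z⁆ = 0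
  lie_U_E : ⁅U, E⁆ = 0
  lie_U_Z : ⁅U, Z⁆ = 0
  lie_V_E : ⁅V, E⁆ = 0
  lie_V_Z : ⁅V, Z⁆ = 0
  lie_E_Z : ⁅E, Z⁆ = 0

namespace BracketRelations

variable {R : Type*} [CommRing R] [LieAlgebra R L] {X U V E Z : L} (x u v e z : R)

theorem lie_comb_X (h : BracketRelations X U V E Z) :
    ⁅x • X + u • U + v • V + e • E + z • Z, X⁆ = -(u • V) - v • Z := by
  simp only [add_lie, smul_lie, lie_self,
    ← lie_skew U X, ← lie_skew V X, ← lie_skew E X, ← lie_skew Z X,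
    h.lie_X_U, h.lie_X_V, h.lie_X_E, h.lie_X_Z]
  module

theorem lie_comb_U (h : BracketRelations X U V E Z) :
    ⁅x • X + u • U + v • V + e • E + z • Z, U⁆ = x • V - v • E := by
  simp only [add_lie, smul_lie, lie_self, ← lie_skew V U, ← lie_skew E U, ← lie_skew Z U,
    h.lie_X_U, h.lie_U_V, h.lie_U_E, h.lie_U_Z]
  module

theorem lie_comb_V (h : BracketRelations X U V E Z) :
    ⁅x • X + u • U + v • V + e • E + z • Z, V⁆ = x • Z + u • E := by
  simp only [add_lie, smul_lie, lie_self, ← lie_skew E V, ← lie_skew Z V,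
    h.lie_X_V, h.lie_U_V, h.lie_V_E, h.lie_V_Z]
  module

theorem lie_comb_E (h : BracketRelations X U V E Z) :
    ⁅x • X + u • U + v • V + e • E + z • Z, E⁆ = 0 := by
  simp only [add_lie, smul_lie, lie_self, ← lie_skew Z E,
    h.lie_X_E, h.lie_U_E, h.lie_V_E, h.lie_E_Z]
  module

theorem lie_comb_Z (h : BracketRelations X U V E Z) :
    ⁅x • X + u • U + v • V + e • E + z • Z, Z⁆ = 0 := by
  simp only [add_lie, smul_lie, lie_self, h.lie_X_Z, h.lie_U_Z, h.lie_V_Z, h.lie_E_Z]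
  module

theorem comb_mem_coadjointStabilizer_iff (h : BracketRelations X U V E Z)
    (b : Basis (Fin 5) R L) (hb : ⇑b = ![X, U, V, E, Z]) {l : Dual R L} (hlE : l E = 1) :
    x • X + u • U + v • V + e • E + z • Z ∈ coadjointStabilizer l ↔
      u = -(x * l Z) ∧ v = x * l V := by
  rw [mem_coadjointStabilizer_iff_basis b]
  simp only [Fin.forall_fin_succ, IsEmpty.forall_iff, hb, Matrix.cons_val_zero,
    Matrix.cons_val_succ, h.lie_comb_X, h.lie_comb_U, h.lie_comb_V, h.lie_comb_E, h.lie_comb_Z,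
    map_sub, map_add, map_neg, map_smul, map_zero, smul_eq_mul, hlE, mul_one, and_true]
  constructor
  · rintro ⟨-, hU, hV⟩
    exact ⟨by linear_combination hV, by linear_combination -hU⟩
  · rintro ⟨rfl, rfl⟩
    exact ⟨by ring, by ring, by ring⟩

theorem coadjointStabilizer_eq_span (h : BracketRelations X U V E Z) (b : Basis (Fin 5) R L)
    (hb : ⇑b = ![X, U, V, E, Z]) {l : Dual R L} (hlE : l E = 1) :
    coadjointStabilizer l = Submodule.span R {E, Z, X - l Z • U + l V • V} := by
  apply le_antisymm
  · intro Y hY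
    obtain ⟨x, u, v, e, z, rfl⟩ := b.exists_eq_five hb Y
    obtain ⟨rfl, rfl⟩ := (h.comb_mem_coadjointStabilizer_iff x u v e z b hb hlE).1 hY
    exact Submodule.mem_span_triple.2 ⟨e, z, x, by module⟩
  · rw [Submodule.span_le]
    rintro _ (rfl | rfl | rfl)
    · simpa using (h.comb_mem_coadjointStabilizer_iff 0 0 0 1 0 b hb hlE).2 (by simp)
    · simpa using (h.comb_mem_coadjointStabilizer_iff 0 0 0 0 1 b hb hlE).2 (by simp)
    · simpa [sub_eq_add_neg] using
        (h.comb_mem_coadjointStabilizer_iff 1 (-l Z) (l V) 0 0 b hb hlE).2 (by simp)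

end BracketRelations

end Relations

theorem stmt_4_general (L : Type) [LieRing L] [LieAlgebra ℝ L]
    (X U V E Z : L) (b : Module.Basis (Fin 5) ℝ L) (hb : ⇑b = ![X, U, V, E, Z])
    (hUV : ⁅U, V⁆ = E) (hXU : ⁅X, U⁆ = V) (hXV : ⁅X, V⁆ = Z)
    (hXE : ⁅X, E⁆ = 0) (hXZ : ⁅X, Z⁆ = 0) (hUE : ⁅U, E⁆ = 0) (hUZ : ⁅U, Z⁆ = 0)
    (hVE : ⁅V, E⁆ = 0) (hVZ : ⁅V, Z⁆ = 0) (hEZ : ⁅E, Z⁆ = 0)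
    (l : L →ₗ[ℝ] ℝ) (hlE : l E = 1) :
    ∀ Y : L, (∀ W : L, l ⁅Y, W⁆ = 0) ↔
      Y ∈ Submodule.span ℝ ({E, Z, X - l Z • U + l V • V} : Set L) := by
  have h : BracketRelations X U V E Z :=
    ⟨hUV, hXU, hXV, hXE, hXZ, hUE, hUZ, hVE, hVZ, hEZ⟩
  intro Y
  rw [← mem_coadjointStabilizer, h.coadjointStabilizer_eq_span b hb hlE]

/-- Coadjoint stabilizer: for the Lie algebra `g` with basis `{X,U,V,E,Z}`, brackets
`[U,V]=E`, `[X,U]=V`, `[X,V]=Z`, and `l ∈ g*` with `l(E)=1`, `l(X)=0`, the stabilizer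
`g(l) = {Y : ∀ W, l([Y,W])=0}` equals `span{E, Z, X - l(Z)U + l(V)V}`. -/
theorem stmt_4 (L : Type) [LieRing L] [LieAlgebra ℝ L]
    (X U V E Z : L) (b : Module.Basis (Fin 5) ℝ L) (hb : ⇑b = ![X, U, V, E, Z])
    (hUV : ⁅U, V⁆ = E) (hXU : ⁅X, U⁆ = V) (hXV : ⁅X, V⁆ = Z)
    (hXE : ⁅X, E⁆ = 0) (hXZ : ⁅X, Z⁆ = 0) (hUE : ⁅U, E⁆ = 0) (hUZ : ⁅U, Z⁆ = 0)
    (hVE : ⁅V, E⁆ = 0) (hVZ : ⁅V, Z⁆ = 0) (hEZ : ⁅E, Z⁆ = 0)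
    (l : L →ₗ[ℝ] ℝ) (hlE : l E = 1) (hlX : l X = 0) :
    ∀ Y : L, (∀ W : L, l ⁅Y, W⁆ = 0) ↔
      Y ∈ Submodule.span ℝ ({E, Z, X - l Z • U + l V • V} : Set L) :=
  stmt_4_general L X U V E Z b hb hUV hXU hXV hXE hXZ hUE hUZ hVE hVZ hEZ l hlE
end

section
/- In the Lie algebra g with basis {X,U,V,E,Z} and brackets [U,V]=E, [X,U]=V, [X,V]=Z, for any l ∈ g* with l(E)=1, l(X)=0 and l(Z) ≠ 0, the subspace b = span{E, Z, V, X - l(Z)U + l(V)V} is a polarization at l: it is a Lie subalgebra of g, it contains the stabilizer g(l), it has dimension (dim g + dim g(l))/2 = 4, and l([b, b]) = 0. -/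
/-!
Put `W = X - l(Z) U + l(V) V`. Among `E, Z, V, W` the only nonzero bracket is
`⁅W, V⁆ = Z - l(Z) E`, which lies in `b` and is killed by `l` because `l(E) = 1`; since the
bracket is bilinear, `b` is then a Lie subalgebra on which `l ∘ ⁅·,·⁆` vanishes.
In coordinates `Y = aX + c₁U + c₂V + dE + eZ` one has `l⁅Y, U⁆ = a l(V) - c₂` and
`l⁅Y, V⁆ = a l(Z) + c₁`, so `Y ∈ g(l)` forces `Y = aW + dE + eZ ∈ b`. Finally the spanning
vectors of `b` are triangular in the basis, so `b` has dimension `4`.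
-/

open Submodule

theorem lie_mem_of_mem_span {R L : Type*} [CommRing R] [LieRing L] [LieAlgebra R L]
    {s : Set L} {N : Submodule R L} (h : ∀ x ∈ s, ∀ y ∈ s, ⁅x, y⁆ ∈ N) {x y : L}
    (hx : x ∈ span R s) (hy : y ∈ span R s) : ⁅x, y⁆ ∈ N := by
  have hspan : map₂ (LieModule.toEnd R L L : L →ₗ[R] Module.End R L) (span R s) (span R s)
      ≤ N := by
    rw [map₂_span_span, span_le]
    rintro _ ⟨x, hx, y, hy, rfl⟩
    exact h x hx y hy
  exact hspan (apply_mem_map₂ _ hx hy)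

theorem lie_mem_span_singleton_lie {R L : Type*} [CommRing R] [LieRing L] [LieAlgebra R L]
    {E Z V W : L} (hEZ : ⁅E, Z⁆ = 0) (hVE : ⁅V, E⁆ = 0) (hVZ : ⁅V, Z⁆ = 0)
    (hWE : ⁅W, E⁆ = 0) (hWZ : ⁅W, Z⁆ = 0) :
    ∀ x ∈ ({E, Z, V, W} : Set L), ∀ y ∈ ({E, Z, V, W} : Set L), ⁅x, y⁆ ∈ R ∙ ⁅W, V⁆ := by
  have swap {x y : L} (h : ⁅x, y⁆ = 0) : ⁅y, x⁆ = 0 := by rw [← lie_skew, h, neg_zero]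
  simp only [Set.mem_insert_iff, Set.mem_singleton_iff]
  rintro x (hx | hx | hx | hx) y (hy | hy | hy | hy) <;> subst x y <;>
    simp only [lie_self, hEZ, hVE, hVZ, hWE, hWZ, swap hEZ, swap hVE, swap hVZ, swap hWE,
      swap hWZ, zero_mem, mem_span_singleton_self, ← lie_skew V W, neg_mem_iff]

theorem mem_span_of_lie_eq_zero {R L : Type*} [CommRing R] [LieRing L] [LieAlgebra R L]
    {X U V E Z : L} (b : Module.Basis (Fin 5) R L) (hb : ⇑b = ![X, U, V, E, Z])
    (hUV : ⁅U, V⁆ = E) (hXU : ⁅X, U⁆ = V) (hXV : ⁅X, V⁆ = Z)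
    (hUE : ⁅U, E⁆ = 0) (hUZ : ⁅U, Z⁆ = 0) (hVE : ⁅V, E⁆ = 0) (hVZ : ⁅V, Z⁆ = 0)
    (l : L →ₗ[R] R) (hlE : l E = 1) {Y : L} (hYU : l ⁅Y, U⁆ = 0) (hYV : l ⁅Y, V⁆ = 0) :
    Y ∈ span R {E, Z, V, X - l Z • U + l V • V} := by
  obtain ⟨a, c₁, c₂, d, e, rfl⟩ :
      ∃ a c₁ c₂ d e : R, Y = a • X + c₁ • U + c₂ • V + d • E + e • Z :=
    ⟨_, _, _, _, _, by simpa [Fin.sum_univ_five, hb] using (b.sum_repr Y).symm⟩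
  rw [← lie_skew] at hYU hYV
  simp only [lie_add, lie_smul, lie_self, ← lie_skew U X, ← lie_skew V X, ← lie_skew V U, hXU,
    hXV, hUV, hUE, hUZ, hVE, hVZ, map_add, map_neg, map_smul, map_zero, smul_eq_mul, hlE,
    mul_zero, add_zero] at hYU hYV
  have hY : a • X + c₁ • U + c₂ • V + d • E + e • Z
      = a • (X - l Z • U + l V • V) + d • E + e • Z := by
    rw [show c₁ = -(a * l Z) by linear_combination hYV,
      show c₂ = a * l V by linear_combination -hYU]
    module
  rw [hY]
  exact add_mem (add_mem (smul_mem _ _ (subset_span (by simp)))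
    (smul_mem _ _ (subset_span (by simp)))) (smul_mem _ _ (subset_span (by simp)))

theorem finrank_span_eq_four {R M : Type*} [CommRing R] [Nontrivial R] [AddCommGroup M]
    [Module R M] (b : Module.Basis (Fin 5) R M) (a c : R) :
    Module.finrank R (span R {b 3, b 4, b 2, b 0 - a • b 1 + c • b 2}) = 4 := by
  have hli : LinearIndependent R ![b 3, b 4, b 2, b 0 - a • b 1 + c • b 2] := by
    rw [Fintype.linearIndependent_iff]
    intro g hg
    have hcoord (j : Fin 5) := congrArg (fun v => b.repr v j) hg
    have h3 : g 3 = 0 := by simpa [Fin.sum_univ_four, Finsupp.single_apply] using hcoord 0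
    intro i
    fin_cases i
    · simpa [Fin.sum_univ_four, Finsupp.single_apply] using hcoord 3
    · simpa [Fin.sum_univ_four, Finsupp.single_apply] using hcoord 4
    · simpa [Fin.sum_univ_four, Finsupp.single_apply, h3] using hcoord 2
    · exact h3
  have hrange : Set.range ![b 3, b 4, b 2, b 0 - a • b 1 + c • b 2]
      = {b 3, b 4, b 2, b 0 - a • b 1 + c • b 2} := by
    simp only [Matrix.range_cons, Matrix.range_empty, Set.union_empty, Set.singleton_union]
  rw [← hrange, finrank_span_eq_card hli, Fintype.card_fin]

theorem stmt_5_general (L : Type) [LieRing L] [LieAlgebra ℝ L]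
    (X U V E Z : L) (b : Module.Basis (Fin 5) ℝ L) (hb : ⇑b = ![X, U, V, E, Z])
    (hUV : ⁅U, V⁆ = E) (hXU : ⁅X, U⁆ = V) (hXV : ⁅X, V⁆ = Z)
    (hXE : ⁅X, E⁆ = 0) (hXZ : ⁅X, Z⁆ = 0) (hUE : ⁅U, E⁆ = 0) (hUZ : ⁅U, Z⁆ = 0)
    (hVE : ⁅V, E⁆ = 0) (hVZ : ⁅V, Z⁆ = 0) (hEZ : ⁅E, Z⁆ = 0)
    (l : L →ₗ[ℝ] ℝ) (hlE : l E = 1)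
    (bV : Submodule ℝ L)
    (hbV : bV = Submodule.span ℝ ({E, Z, V, X - l Z • U + l V • V} : Set L)) :
    (∀ x ∈ bV, ∀ y ∈ bV, ⁅x, y⁆ ∈ bV) ∧
    (∀ Y : L, (∀ W : L, l ⁅Y, W⁆ = 0) → Y ∈ bV) ∧
    Module.finrank ℝ ↥bV = 4 ∧
    (∀ x ∈ bV, ∀ y ∈ bV, l ⁅x, y⁆ = 0) := by
  subst hbV
  set W := X - l Z • U + l V • V
  have hWV : ⁅W, V⁆ = Z - l Z • E := by simp [W, sub_lie, add_lie, smul_lie, hXV, hUV]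
  have hWE : ⁅W, E⁆ = 0 := by simp [W, sub_lie, add_lie, smul_lie, hXE, hUE, hVE]
  have hWZ : ⁅W, Z⁆ = 0 := by simp [W, sub_lie, add_lie, smul_lie, hXZ, hUZ, hVZ]
  have hbrackets {x y : L} (hx : x ∈ span ℝ {E, Z, V, W}) (hy : y ∈ span ℝ {E, Z, V, W}) :
      ⁅x, y⁆ ∈ ℝ ∙ ⁅W, V⁆ :=
    lie_mem_of_mem_span (lie_mem_span_singleton_lie hEZ hVE hVZ hWE hWZ) hx hy
  refine ⟨fun x hx y hy => ?_, fun Y hY => ?_, ?_, fun x hx y hy => ?_⟩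
  · refine (span_singleton_le_iff_mem _ _).2 ?_ (hbrackets hx hy)
    rw [hWV]
    exact sub_mem (subset_span (by simp)) (smul_mem _ _ (subset_span (by simp)))
  · exact mem_span_of_lie_eq_zero b hb hUV hXU hXV hUE hUZ hVE hVZ l hlE (hY U) (hY V)
  · have hfour := finrank_span_eq_four b (l Z) (l V)
    rw [hb] at hfour
    exact hfour
  · obtain ⟨c, hc⟩ := mem_span_singleton.1 (hbrackets hx hy)
    simp [← hc, hWV, hlE]

/-- For the 5-dimensional nilpotent Lie algebra `g` with basis `{X,U,V,E,Z}` and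
brackets `[U,V]=E`, `[X,U]=V`, `[X,V]=Z`, and `l ∈ g*` with `l(E)=1`, `l(X)=0`,
`l(Z) ≠ 0`, the subspace `b = span{E, Z, V, X - l(Z)U + l(V)V}` is a polarization at
`l`: a Lie subalgebra containing the stabilizer `g(l)`, of dimension
`(dim g + dim g(l))/2 = 4`, with `l([b,b]) = 0`. -/
theorem stmt_5 (L : Type) [LieRing L] [LieAlgebra ℝ L]
    (X U V E Z : L) (b : Module.Basis (Fin 5) ℝ L) (hb : ⇑b = ![X, U, V, E, Z])
    (hUV : ⁅U, V⁆ = E) (hXU : ⁅X, U⁆ = V) (hXV : ⁅X, V⁆ = Z)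
    (hXE : ⁅X, E⁆ = 0) (hXZ : ⁅X, Z⁆ = 0) (hUE : ⁅U, E⁆ = 0) (hUZ : ⁅U, Z⁆ = 0)
    (hVE : ⁅V, E⁆ = 0) (hVZ : ⁅V, Z⁆ = 0) (hEZ : ⁅E, Z⁆ = 0)
    (l : L →ₗ[ℝ] ℝ) (hlE : l E = 1) (hlX : l X = 0) (hlZ : l Z ≠ 0)
    (bV : Submodule ℝ L)
    (hbV : bV = Submodule.span ℝ ({E, Z, V, X - l Z • U + l V • V} : Set L)) :
    (∀ x ∈ bV, ∀ y ∈ bV, ⁅x, y⁆ ∈ bV) ∧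
    (∀ Y : L, (∀ W : L, l ⁅Y, W⁆ = 0) → Y ∈ bV) ∧
    Module.finrank ℝ ↥bV = 4 ∧
    (∀ x ∈ bV, ∀ y ∈ bV, l ⁅x, y⁆ = 0) :=
  stmt_5_general L X U V E Z b hb hUV hXU hXV hXE hXZ hUE hUZ hVE hVZ hEZ l hlE bV hbV
end

section
/- In the Lie algebra g with basis {X,U,V,E,Z} and brackets [U,V]=E, [X,U]=V, [X,V]=Z, for l ∈ g* with l(E)=1, l(X)=0, l(Z) ≠ 0, the only vector Y in span{U,V} (up to scalar) with Y ∉ g(l) and [Y, g(l)] ⊆ g(l) is Y = V; consequently span{E,Z,V, X - l(Z)U + l(V)V} is the unique polarization at l containing g(l) and contained in g(l) + span{U,V}. -/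
/-!
Put `T = X - l(Z) U + l(V) V`, so that `g(l) = span{E, Z, T}`. For `Y = aU + cV` one has
`[Y, E] = [Y, Z] = 0` and `[Y, T] = (a l(V) + c l(Z)) E - a V - c Z`; as `E, Z ∈ g(l)` and `g(l)`
meets `span{U, V}` trivially, `Y` normalizes `g(l)` exactly when `a = 0`.

A 4-dimensional subalgebra `p` with `g(l) ⊆ p ⊆ g(l) + span{U, V}` contains some `Y = aU + cV`
outside `g(l)`, and then `[Y, T] ∈ p` gives `aV ∈ p`. If `a ≠ 0`, both `U` and `V` lie in `p` and
`p = g`, which is 5-dimensional. So `a = 0`, `V ∈ p`, `U ∉ p`, and therefore `p = g(l) + ℝV`.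
-/

open Module Submodule

theorem eq_zero_of_linearIndependent_fin_five {R M : Type*} [Ring R] [AddCommGroup M]
    [Module R M] {x₀ x₁ x₂ x₃ x₄ : M} (h : LinearIndependent R ![x₀, x₁, x₂, x₃, x₄])
    {a₀ a₁ a₂ a₃ a₄ : R} (hsum : a₀ • x₀ + a₁ • x₁ + a₂ • x₂ + a₃ • x₃ + a₄ • x₄ = 0) :
    a₀ = 0 ∧ a₁ = 0 ∧ a₂ = 0 ∧ a₃ = 0 ∧ a₄ = 0 := by
  have h' := Fintype.linearIndependent_iff.mp h ![a₀, a₁, a₂, a₃, a₄]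
    (by simpa [Fin.sum_univ_five] using hsum)
  exact ⟨h' 0, h' 1, h' 2, h' 3, h' 4⟩

theorem exists_smul_add_smul_mem_not_mem {R M : Type*} [Ring R] [AddCommGroup M] [Module R M]
    {S p : Submodule R M} {u v : M} (hlt : S < p) (hle : p ≤ S ⊔ span R {u, v}) :
    ∃ a c : R, a • u + c • v ∈ p ∧ a • u + c • v ∉ S := by
  obtain ⟨y, hyp, hyS⟩ := SetLike.exists_of_lt hlt
  obtain ⟨s, hs, w, hw, rfl⟩ := mem_sup.1 (hle hyp)
  obtain ⟨a, c, rfl⟩ := mem_span_pair.1 hw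
  exact ⟨a, c, (p.add_mem_iff_right (hlt.le hs)).1 hyp, fun h => hyS (S.add_mem hs h)⟩

theorem eq_sup_span_singleton_of_le_sup_span_pair {K M : Type*} [DivisionRing K]
    [AddCommGroup M] [Module K M] {S p : Submodule K M} {u v : M} (hSp : S ≤ p)
    (hpS : p ≤ S ⊔ span K {u, v}) (hv : v ∈ p) (hu : u ∉ p) : p = S ⊔ K ∙ v := by
  refine le_antisymm (fun x hx => ?_) (sup_le hSp ((span_singleton_le_iff_mem _ _).2 hv))
  obtain ⟨s, hs, w, hw, rfl⟩ := mem_sup.1 (hpS hx)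
  obtain ⟨a, c, rfl⟩ := mem_span_pair.1 hw
  obtain rfl : a = 0 := by
    by_contra ha
    refine hu ((p.smul_mem_iff ha).1 ?_)
    have hau : a • u = s + (a • u + c • v) - s - c • v := by abel
    rw [hau]
    exact sub_mem (sub_mem hx (hSp hs)) (p.smul_mem c hv)
  rw [zero_smul, zero_add]
  exact add_mem_sup hs (smul_mem _ c (mem_span_singleton_self v))

section

variable {R L : Type*} [CommRing R] [LieRing L] [LieAlgebra R L]

theorem forall_lie_mem_of_mem_span {S : Set L} {N : Submodule R L} {y : L}
    (h : ∀ s ∈ S, ⁅y, s⁆ ∈ N) : ∀ w ∈ span R S, ⁅y, w⁆ ∈ N :=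
  fun _ hw => span_le (p := N.comap (LieModule.toEnd R L L y)).2 h hw

variable {X U V E Z : L}

theorem lie_smul_add_smul (hUV : ⁅U, V⁆ = E) (hXU : ⁅X, U⁆ = V) (hXV : ⁅X, V⁆ = Z)
    (a c μ ν : R) :
    ⁅a • U + c • V, X - μ • U + ν • V⁆ = (a * ν + c * μ) • E - a • V - c • Z := by
  have hVU : ⁅V, U⁆ = -E := by rw [← lie_skew, hUV]
  have hUX : ⁅U, X⁆ = -V := by rw [← lie_skew, hXU]
  have hVX : ⁅V, X⁆ = -Z := by rw [← lie_skew, hXV]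
  simp only [lie_add, add_lie, lie_sub, lie_smul, smul_lie, hUV, hUX, hVX, hVU, lie_self]
  module

theorem lie_smul_add_smul_mem_iff (hUV : ⁅U, V⁆ = E) (hXU : ⁅X, U⁆ = V) (hXV : ⁅X, V⁆ = Z)
    {p : Submodule R L} (hE : E ∈ p) (hZ : Z ∈ p) (a c μ ν : R) :
    ⁅a • U + c • V, X - μ • U + ν • V⁆ ∈ p ↔ a • V ∈ p := by
  rw [lie_smul_add_smul hUV hXU hXV, sub_sub, p.sub_mem_iff_right (p.smul_mem _ hE),
    p.add_mem_iff_left (p.smul_mem _ hZ)]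

theorem smul_add_smul_mem_span_iff (hli : LinearIndependent R ![X, U, V, E, Z])
    (a c μ ν : R) : a • U + c • V ∈ span R {E, Z, X - μ • U + ν • V} ↔ a = 0 ∧ c = 0 := by
  refine ⟨fun h => ?_, by rintro ⟨rfl, rfl⟩; simp⟩
  obtain ⟨α, β, γ, hw⟩ := mem_span_triple.1 h
  obtain ⟨hγ, ha, hc, -, -⟩ := eq_zero_of_linearIndependent_fin_five hli
    (a₀ := -γ) (a₁ := a + γ * μ) (a₂ := c - γ * ν) (a₃ := -α) (a₄ := -β)
    (by linear_combination (norm := module) -hw)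
  obtain rfl : γ = 0 := neg_eq_zero.1 hγ
  simp_all

theorem smul_add_smul_normalizes_span_iff (hli : LinearIndependent R ![X, U, V, E, Z])
    (hUV : ⁅U, V⁆ = E) (hXU : ⁅X, U⁆ = V) (hXV : ⁅X, V⁆ = Z) (hUE : ⁅U, E⁆ = 0)
    (hUZ : ⁅U, Z⁆ = 0) (hVE : ⁅V, E⁆ = 0) (hVZ : ⁅V, Z⁆ = 0) (μ ν a c : R) :
    (a • U + c • V ∉ span R {E, Z, X - μ • U + ν • V} ∧
      ∀ W ∈ span R {E, Z, X - μ • U + ν • V},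
        ⁅a • U + c • V, W⁆ ∈ span R {E, Z, X - μ • U + ν • V}) ↔ a = 0 ∧ c ≠ 0 := by
  set S := span R {E, Z, X - μ • U + ν • V}
  have hT : X - μ • U + ν • V ∈ S := subset_span (by simp)
  have hbrT : ⁅a • U + c • V, X - μ • U + ν • V⁆ ∈ S ↔ a = 0 := by
    rw [lie_smul_add_smul_mem_iff hUV hXU hXV (subset_span (by simp)) (subset_span (by simp))]
    simpa using smul_add_smul_mem_span_iff hli 0 a μ ν
  rw [smul_add_smul_mem_span_iff hli]
  constructor
  · rintro ⟨hnot, hnorm⟩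
    have ha := hbrT.1 (hnorm _ hT)
    exact ⟨ha, fun hc => hnot ⟨ha, hc⟩⟩
  · rintro ⟨ha, hc⟩
    refine ⟨fun h => hc h.2, forall_lie_mem_of_mem_span ?_⟩
    simp only [Set.mem_insert_iff, Set.mem_singleton_iff, forall_eq_or_imp, forall_eq]
    exact ⟨by simp [hUE, hVE], by simp [hUZ, hVZ], hbrT.2 ha⟩

theorem span_triple_sup_span_pair_eq_top (b : Basis (Fin 5) R L) (hb : ⇑b = ![X, U, V, E, Z])
    (μ ν : R) : span R {E, Z, X - μ • U + ν • V} ⊔ span R {U, V} = ⊤ := by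
  set S := span R {E, Z, X - μ • U + ν • V}
  have hU : U ∈ S ⊔ span R {U, V} := mem_sup_right (subset_span (by simp))
  have hV : V ∈ S ⊔ span R {U, V} := mem_sup_right (subset_span (by simp))
  have hX : X ∈ S ⊔ span R {U, V} := by
    have hXT : X = (X - μ • U + ν • V) + μ • U - ν • V := by abel
    rw [hXT]
    exact sub_mem (add_mem (mem_sup_left (subset_span (by simp))) (smul_mem _ μ hU))
      (smul_mem _ ν hV)
  rw [eq_top_iff, ← b.span_eq, span_le, Set.range_subset_iff, hb]
  intro i
  fin_cases i
  exacts [hX, hU, hV, mem_sup_left (subset_span (by simp)), mem_sup_left (subset_span (by simp))]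

end

section

variable {K L : Type*} [Field K] [LieRing L] [LieAlgebra K L] {X U V E Z : L}

theorem eq_span_of_lie_mem_of_finrank_eq_four (b : Basis (Fin 5) K L)
    (hb : ⇑b = ![X, U, V, E, Z]) (hUV : ⁅U, V⁆ = E) (hXU : ⁅X, U⁆ = V) (hXV : ⁅X, V⁆ = Z)
    (μ ν : K) {p : Submodule K L} (hp : ∀ x ∈ p, ∀ y ∈ p, ⁅x, y⁆ ∈ p)
    (hSp : span K {E, Z, X - μ • U + ν • V} ≤ p)
    (hpS : p ≤ span K {E, Z, X - μ • U + ν • V} ⊔ span K {U, V}) (hdim : finrank K p = 4) :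
    p = span K {E, Z, V, X - μ • U + ν • V} := by
  set S := span K {E, Z, X - μ • U + ν • V}
  have hE : E ∈ p := hSp (subset_span (by simp))
  have hZ : Z ∈ p := hSp (subset_span (by simp))
  have hT : X - μ • U + ν • V ∈ p := hSp (subset_span (by simp))
  have hUV_not_mem : U ∈ p → V ∉ p := by
    intro hU hV
    have hp_top : p = ⊤ := eq_top_iff.2 <| (span_triple_sup_span_pair_eq_top b hb μ ν).ge.trans <|
      sup_le hSp (span_le.2 (by simp [Set.insert_subset_iff, hU, hV]))
    rw [hp_top, finrank_top, finrank_eq_card_basis b] at hdim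
    simp at hdim
  have hSlt : S < p := by
    refine lt_of_le_of_ne hSp fun hSp_eq => ?_
    classical
    have hS := finrank_span_finset_le_card (R := K) ({E, Z, X - μ • U + ν • V} : Finset L)
    rw [Set.finrank, Finset.coe_insert, Finset.coe_insert, Finset.coe_singleton] at hS
    have hS3 : finrank K S ≤ 3 := hS.trans Finset.card_le_three
    rw [hSp_eq] at hS3
    omega
  obtain ⟨a, c, hw, hwS⟩ := exists_smul_add_smul_mem_not_mem hSlt hpS
  have haV : a • V ∈ p := (lie_smul_add_smul_mem_iff hUV hXU hXV hE hZ a c μ ν).1 (hp _ hw _ hT)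
  obtain rfl : a = 0 := by
    by_contra ha
    have hV := (p.smul_mem_iff ha).1 haV
    exact hUV_not_mem ((p.smul_mem_iff ha).1 ((p.add_mem_iff_left (p.smul_mem c hV)).1 hw)) hV
  have hc : c ≠ 0 := by
    rintro rfl
    simp at hwS
  have hV : V ∈ p := by simpa [p.smul_mem_iff hc] using hw
  rw [eq_sup_span_singleton_of_le_sup_span_pair hSp hpS hV (fun hU => hUV_not_mem hU hV),
    sup_comm, ← span_insert, Set.insert_comm V E, Set.insert_comm V Z]

end

theorem stmt_6_general (L : Type) [LieRing L] [LieAlgebra ℝ L]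
    (X U V E Z : L) (b : Module.Basis (Fin 5) ℝ L) (hb : ⇑b = ![X, U, V, E, Z])
    (hUV : ⁅U, V⁆ = E) (hXU : ⁅X, U⁆ = V) (hXV : ⁅X, V⁆ = Z)
    (hUE : ⁅U, E⁆ = 0) (hUZ : ⁅U, Z⁆ = 0)
    (hVE : ⁅V, E⁆ = 0) (hVZ : ⁅V, Z⁆ = 0)
    (l : L →ₗ[ℝ] ℝ)
    (stab : Submodule ℝ L)
    (hstab : stab = Submodule.span ℝ ({E, Z, X - l Z • U + l V • V} : Set L)) :
    (∀ a c : ℝ,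
      ((a • U + c • V ∉ stab) ∧ ∀ W ∈ stab, ⁅a • U + c • V, W⁆ ∈ stab) ↔
        (a = 0 ∧ c ≠ 0)) ∧
    (∀ p : Submodule ℝ L,
      (∀ x ∈ p, ∀ y ∈ p, ⁅x, y⁆ ∈ p) →
      stab ≤ p →
      p ≤ stab ⊔ Submodule.span ℝ ({U, V} : Set L) →
      Module.finrank ℝ ↥p = 4 →
      (∀ x ∈ p, ∀ y ∈ p, l ⁅x, y⁆ = 0) →
      p = Submodule.span ℝ ({E, Z, V, X - l Z • U + l V • V} : Set L)) := by
  subst hstab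
  exact ⟨smul_add_smul_normalizes_span_iff (hb ▸ b.linearIndependent) hUV hXU hXV hUE hUZ hVE
      hVZ _ _,
    fun _ hp hSp hpS hdim _ => eq_span_of_lie_mem_of_finrank_eq_four b hb hUV hXU hXV _ _ hp hSp
      hpS hdim⟩

/-- For the Lie algebra `g = span{X,U,V,E,Z}` with brackets `[U,V]=E`, `[X,U]=V`,
`[X,V]=Z` and `l ∈ g*` with `l(E)=1`, `l(X)=0`, `l(Z)≠0` (so that the stabilizer is
`g(l) = span{E,Z, X - l(Z)U + l(V)V}`): the only vector `Y ∈ span{U,V}` (up to nonzero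
scalar) with `Y ∉ g(l)` and `[Y, g(l)] ⊆ g(l)` is `Y = V`; consequently
`span{E,Z,V, X - l(Z)U + l(V)V}` is the unique polarization at `l` containing `g(l)`
and contained in `g(l) + span{U,V}`. -/
theorem stmt_6 (L : Type) [LieRing L] [LieAlgebra ℝ L]
    (X U V E Z : L) (b : Module.Basis (Fin 5) ℝ L) (hb : ⇑b = ![X, U, V, E, Z])
    (hUV : ⁅U, V⁆ = E) (hXU : ⁅X, U⁆ = V) (hXV : ⁅X, V⁆ = Z)
    (hXE : ⁅X, E⁆ = 0) (hXZ : ⁅X, Z⁆ = 0) (hUE : ⁅U, E⁆ = 0) (hUZ : ⁅U, Z⁆ = 0)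
    (hVE : ⁅V, E⁆ = 0) (hVZ : ⁅V, Z⁆ = 0) (hEZ : ⁅E, Z⁆ = 0)
    (l : L →ₗ[ℝ] ℝ) (hlE : l E = 1) (hlX : l X = 0) (hlZ : l Z ≠ 0)
    (stab : Submodule ℝ L)
    (hstab : stab = Submodule.span ℝ ({E, Z, X - l Z • U + l V • V} : Set L)) :
    (∀ a c : ℝ,
      ((a • U + c • V ∉ stab) ∧ ∀ W ∈ stab, ⁅a • U + c • V, W⁆ ∈ stab) ↔
        (a = 0 ∧ c ≠ 0)) ∧
    (∀ p : Submodule ℝ L,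
      (∀ x ∈ p, ∀ y ∈ p, ⁅x, y⁆ ∈ p) →
      stab ≤ p →
      p ≤ stab ⊔ Submodule.span ℝ ({U, V} : Set L) →
      Module.finrank ℝ ↥p = 4 →
      (∀ x ∈ p, ∀ y ∈ p, l ⁅x, y⁆ = 0) →
      p = Submodule.span ℝ ({E, Z, V, X - l Z • U + l V • V} : Set L)) :=
  stmt_6_general L X U V E Z b hb hUV hXU hXV hUE hUZ hVE hVZ l stab hstab
end

section
/- In the Lie algebra g with basis {X,U,V,E,Z} and brackets [U,V]=E, [X,U]=V, [X,V]=Z, with h = span{X,E} and q = span{Z,U,V}, the polarization b = span{E,Z,V, X - l(Z)U} (for generic l with l(Z)≠0, l(V)=0) does not satisfy the transversality condition b = (b ∩ q) + (b ∩ h). -/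
/-!
Let `x` and `u` be the `X`- and `U`-coordinate functionals. The functional `l(Z) x + u` vanishes on
the polarization, and `x` vanishes on `q`, so `u` vanishes on its intersection with `q`; `u` also
vanishes on `h`. Hence `u` kills `(b ∩ q) + (b ∩ h)`, whereas `u (X - l(Z) U) = -l(Z) ≠ 0`.
-/

namespace Submodule

variable {R M N : Type*} [CommRing R] [AddCommGroup M] [Module R M] [AddCommGroup N] [Module R N]

theorem inf_le_ker_of_le_ker_add {p q : Submodule R M} {ψ φ : M →ₗ[R] N}
    (hp : p ≤ LinearMap.ker (ψ + φ)) (hq : q ≤ LinearMap.ker ψ) : p ⊓ q ≤ LinearMap.ker φ := by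
  rintro x ⟨hxp, hxq⟩
  have hsum : ψ x + φ x = 0 := hp hxp
  have hψ : ψ x = 0 := hq hxq
  rw [LinearMap.mem_ker, ← hsum, hψ, zero_add]

theorem ne_inf_sup_inf_of_le_ker {p q h : Submodule R M} {φ : M →ₗ[R] N}
    (hq : p ⊓ q ≤ LinearMap.ker φ) (hh : h ≤ LinearMap.ker φ) {x : M} (hx : x ∈ p)
    (hφx : φ x ≠ 0) : p ≠ (p ⊓ q) ⊔ (p ⊓ h) := by
  intro heq
  have hle : (p ⊓ q) ⊔ (p ⊓ h) ≤ LinearMap.ker φ := sup_le hq (inf_le_right.trans hh)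
  exact hφx (hle (heq ▸ hx))

end Submodule

theorem stmt_7_general (L : Type) [LieRing L] [LieAlgebra ℝ L]
    (X U V E Z : L) (b : Module.Basis (Fin 5) ℝ L) (hb : ⇑b = ![X, U, V, E, Z])
    (l : L →ₗ[ℝ] ℝ) (hlZ : l Z ≠ 0)
    (hsub qsub bpol : Submodule ℝ L)
    (hh : hsub = Submodule.span ℝ ({X, E} : Set L))
    (hq : qsub = Submodule.span ℝ ({Z, U, V} : Set L))
    (hbpol : bpol = Submodule.span ℝ ({E, Z, V, X - l Z • U} : Set L)) :
    bpol ≠ (bpol ⊓ qsub) ⊔ (bpol ⊓ hsub) := by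
  obtain ⟨rfl, rfl, rfl, rfl, rfl⟩ : X = b 0 ∧ U = b 1 ∧ V = b 2 ∧ E = b 3 ∧ Z = b 4 := by
    simp [hb]
  subst hh hq hbpol
  set c := l (b 4)
  have hb_ker : Submodule.span ℝ {b 3, b 4, b 2, b 0 - c • b 1} ≤
      LinearMap.ker (c • b.coord 0 + b.coord 1) := by
    simp [Submodule.span_le, Set.insert_subset_iff]
  have hq_ker : Submodule.span ℝ {b 4, b 1, b 2} ≤ LinearMap.ker (c • b.coord 0) := by
    simp [Submodule.span_le, Set.insert_subset_iff]
  have hh_ker : Submodule.span ℝ {b 0, b 3} ≤ LinearMap.ker (b.coord 1) := by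
    simp [Submodule.span_le, Set.insert_subset_iff]
  refine Submodule.ne_inf_sup_inf_of_le_ker (Submodule.inf_le_ker_of_le_ker_add hb_ker hq_ker)
    hh_ker (x := b 0 - c • b 1) (Submodule.subset_span (by simp)) ?_
  simpa using hlZ

/-- For the Lie algebra `g` with basis `{X,U,V,E,Z}`, brackets `[U,V]=E`, `[X,U]=V`,
`[X,V]=Z`, with `h = span{X,E}` and `q = span{Z,U,V}`, the polarization
`b = span{E,Z,V, X - l(Z)U}` (for `l` with `l(E)=1`, `l(X)=0`, `l(V)=0`, `l(Z)≠0`)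
does not satisfy the transversality condition `b = (b ∩ q) + (b ∩ h)`. -/
theorem stmt_7 (L : Type) [LieRing L] [LieAlgebra ℝ L]
    (X U V E Z : L) (b : Module.Basis (Fin 5) ℝ L) (hb : ⇑b = ![X, U, V, E, Z])
    (hUV : ⁅U, V⁆ = E) (hXU : ⁅X, U⁆ = V) (hXV : ⁅X, V⁆ = Z)
    (hXE : ⁅X, E⁆ = 0) (hXZ : ⁅X, Z⁆ = 0) (hUE : ⁅U, E⁆ = 0) (hUZ : ⁅U, Z⁆ = 0)
    (hVE : ⁅V, E⁆ = 0) (hVZ : ⁅V, Z⁆ = 0) (hEZ : ⁅E, Z⁆ = 0)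
    (l : L →ₗ[ℝ] ℝ) (hlE : l E = 1) (hlX : l X = 0) (hlV : l V = 0) (hlZ : l Z ≠ 0)
    (hsub qsub bpol : Submodule ℝ L)
    (hh : hsub = Submodule.span ℝ ({X, E} : Set L))
    (hq : qsub = Submodule.span ℝ ({Z, U, V} : Set L))
    (hbpol : bpol = Submodule.span ℝ ({E, Z, V, X - l Z • U} : Set L)) :
    bpol ≠ (bpol ⊓ qsub) ⊔ (bpol ⊓ hsub) :=
  stmt_7_general L X U V E Z b hb l hlZ hsub qsub bpol hh hq hbpol
end

section
/- In the universal enveloping algebra U(g) of the Lie algebra g with basis {X,U,V,E,Z} and brackets [U,V]=E, [X,U]=V, [X,V]=Z, with β the symmetrization map from S(g) to U(g), the element A = 2UZ − V² satisfies A² = β(ā²) where ā = 2UZ − V² ∈ S(g); equivalently A² = 4U²Z² − 4Zβ(UV²) + V⁴ where β(UV²) = (UV² + VUV + V²U)/3. -/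
/-!
`Z` commutes with `U` and `V`, and `E = [U, V]` commutes with `V`, so
`UV² + V²U − 2VUV = [E, V] = 0`. Hence the symmetrization `β(UV²) = (UV² + VUV + V²U)/3` is just
`VUV`, and expanding `A² = 4U²Z² − 2Z(UV² + V²U) + V⁴` gives `4U²Z² − 4Z·VUV + V⁴`.
-/

open UniversalEnvelopingAlgebra

section Ring

variable {R : Type*} [Ring R] {u v z : R}

theorem mul_sq_add_sq_mul_of_commute_commutator (h : Commute (u * v - v * u) v) :
    u * v ^ 2 + v ^ 2 * u = 2 * (v * u * v) :=
  calc u * v ^ 2 + v ^ 2 * u = (u * v - v * u) * v - v * (u * v - v * u) + 2 * (v * u * v) := by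
        noncomm_ring
    _ = 2 * (v * u * v) := by rw [h.eq, sub_self, zero_add]

theorem inv_three_smul_sum_eq_of_commute_commutator {K : Type*} [Field K] [CharZero K]
    [Algebra K R] (h : Commute (u * v - v * u) v) :
    (3 : K)⁻¹ • (u * v ^ 2 + v * u * v + v ^ 2 * u) = v * u * v := by
  have hsum : u * v ^ 2 + v * u * v + v ^ 2 * u = (3 : K) • (v * u * v) := by
    rw [add_right_comm, mul_sq_add_sq_mul_of_commute_commutator h, Algebra.smul_def, map_ofNat]
    noncomm_ring
  rw [hsum, inv_smul_smul₀ three_ne_zero]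

theorem sq_two_mul_mul_sub_sq (hzu : Commute z u) (hzv : Commute z v)
    (h : Commute (u * v - v * u) v) :
    (2 * (u * z) - v ^ 2) ^ 2 = 4 * (u ^ 2 * z ^ 2) - 4 * (z * (v * u * v)) + v ^ 4 :=
  calc (2 * (u * z) - v ^ 2) ^ 2
      = 4 * (u * z) ^ 2 - 2 * (z * u * v ^ 2 + v ^ 2 * u * z) + v ^ 4 := by
        rw [hzu.eq]; noncomm_ring
    _ = 4 * (u ^ 2 * z ^ 2) - 2 * (z * (u * v ^ 2 + v ^ 2 * u)) + v ^ 4 := by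
        rw [hzu.symm.mul_pow, ← ((hzv.pow_right 2).mul_right hzu).eq, mul_assoc z, ← mul_add]
    _ = 4 * (u ^ 2 * z ^ 2) - 4 * (z * (v * u * v)) + v ^ 4 := by
        rw [mul_sq_add_sq_mul_of_commute_commutator h]; noncomm_ring

end Ring

section Enveloping

attribute [local instance 100] LieRing.ofAssociativeRing

variable {R L : Type*} [CommRing R] [LieRing L] [LieAlgebra R L]

theorem UniversalEnvelopingAlgebra.ι_mul_sub_ι_mul (a b : L) :
    ι R a * ι R b - ι R b * ι R a = ι R ⁅a, b⁆ := by
  rw [LieHom.map_lie, Ring.lie_def]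

theorem UniversalEnvelopingAlgebra.commute_ι_of_lie_eq_zero {a b : L} (h : ⁅a, b⁆ = 0) :
    Commute (ι R a) (ι R b) :=
  sub_eq_zero.mp (by rw [ι_mul_sub_ι_mul, h, map_zero])

end Enveloping

theorem stmt_9_general (L : Type) [LieRing L] [LieAlgebra ℝ L]
    (U V E Z : L)
    (hUV : ⁅U, V⁆ = E)
    (hUZ : ⁅U, Z⁆ = 0)
    (hVE : ⁅V, E⁆ = 0) (hVZ : ⁅V, Z⁆ = 0)
    (A : UniversalEnvelopingAlgebra ℝ L)
    (hA : A = 2 * (ι ℝ U * ι ℝ Z) - (ι ℝ V) ^ 2) :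
    A ^ 2 = 4 * ((ι ℝ U) ^ 2 * (ι ℝ Z) ^ 2)
      - 4 * (ι ℝ Z *
          ((3 : ℝ)⁻¹ • (ι ℝ U * (ι ℝ V) ^ 2 + ι ℝ V * ι ℝ U * ι ℝ V
            + (ι ℝ V) ^ 2 * ι ℝ U)))
      + (ι ℝ V) ^ 4 := by
  have hZU := (commute_ι_of_lie_eq_zero (R := ℝ) hUZ).symm
  have hZV := (commute_ι_of_lie_eq_zero (R := ℝ) hVZ).symm
  have hEV : Commute (ι ℝ U * ι ℝ V - ι ℝ V * ι ℝ U) (ι ℝ V) := by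
    rw [ι_mul_sub_ι_mul, hUV]
    exact (commute_ι_of_lie_eq_zero hVE).symm
  rw [hA, inv_three_smul_sum_eq_of_commute_commutator hEV, sq_two_mul_mul_sub_sq hZU hZV hEV]

/-- In `U(g)` for `g = span{X,U,V,E,Z}` with `[U,V]=E`, `[X,U]=V`, `[X,V]=Z`, the
element `A = 2UZ − V²` satisfies `A² = β(ā²)` where `β` is PBW symmetrization;
explicitly `A² = 4U²Z² − 4Z·β(UV²) + V⁴` with `β(UV²) = (UV² + VUV + V²U)/3`. -/
theorem stmt_9 (L : Type) [LieRing L] [LieAlgebra ℝ L]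
    (X U V E Z : L) (b : Module.Basis (Fin 5) ℝ L) (hb : ⇑b = ![X, U, V, E, Z])
    (hUV : ⁅U, V⁆ = E) (hXU : ⁅X, U⁆ = V) (hXV : ⁅X, V⁆ = Z)
    (hXE : ⁅X, E⁆ = 0) (hXZ : ⁅X, Z⁆ = 0) (hUE : ⁅U, E⁆ = 0) (hUZ : ⁅U, Z⁆ = 0)
    (hVE : ⁅V, E⁆ = 0) (hVZ : ⁅V, Z⁆ = 0) (hEZ : ⁅E, Z⁆ = 0)
    (A : UniversalEnvelopingAlgebra ℝ L)
    (hA : A = 2 * (ι ℝ U * ι ℝ Z) - (ι ℝ V) ^ 2) :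
    A ^ 2 = 4 * ((ι ℝ U) ^ 2 * (ι ℝ Z) ^ 2)
      - 4 * (ι ℝ Z *
          ((3 : ℝ)⁻¹ • (ι ℝ U * (ι ℝ V) ^ 2 + ι ℝ V * ι ℝ U * ι ℝ V
            + (ι ℝ V) ^ 2 * ι ℝ U)))
      + (ι ℝ V) ^ 4 :=
  stmt_9_general L U V E Z hUV hUZ hVE hVZ A hA
end

section
/- In the Lie algebra g with basis {X,U,V,E,Z} and brackets [U,V]=E, [X,U]=V, [X,V]=Z, with h = span{X,E} and λ = E*, every l ∈ g* with l(E)=1, l(X)=0 and l(Z)≠0 satisfies the lagrangian condition: dim(h·l) = (1/2) dim(g·l), where h·l = {l∘ad(H) : H ∈ h} and g·l = {l∘ad(Y) : Y ∈ g} (explicitly dim(h·l)=1 and dim(g·l)=2). -/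
/-!
The map `Y ↦ (ad* Y) l` is linear, so `h·l` and `g·l` are the images of `h` and `g` under it.
As `E` and `Z` are central, `h·l` is spanned by `(ad* X) l`, which is nonzero since it takes the
value `-l(Z)` at `V`. Moreover `(ad* X) l = l(Z) (ad* U) l - l(V) (ad* V) l`, so `g·l` is spanned
by `(ad* U) l` and `(ad* V) l`, which are independent: their values at `(U, V)` are `(0, -1)` and
`(1, 0)`.
-/

open Module Submodule

lemma lie_eq_zero_comm {L : Type*} [LieRing L] {x y : L} : ⁅x, y⁆ = 0 ↔ ⁅y, x⁆ = 0 := by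
  rw [← lie_skew, neg_eq_zero]

lemma LinearMap.range_le_iff_basis {R M N ι : Type*} [Ring R] [AddCommGroup M] [Module R M]
    [AddCommGroup N] [Module R N] (φ : M →ₗ[R] N) (b : Basis ι R M) {S : Submodule R N} :
    LinearMap.range φ ≤ S ↔ ∀ i, φ (b i) ∈ S := by
  rw [LinearMap.range_eq_map, ← b.span_eq, map_span, span_le, Set.image_subset_iff,
    Set.range_subset_iff]
  rfl

lemma linearIndependent_pair_of_apply_eq_zero {K M : Type*} [Field K] [AddCommGroup M] [Module K M]
    {f g : Dual K M} {u v : M} (hfu : f u = 0) (hgv : g v = 0) (hfv : f v ≠ 0) (hgu : g u ≠ 0) :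
    LinearIndependent K ![f, g] := by
  rw [LinearIndependent.pair_iff]
  intro s t hst
  have hu := congr($hst u)
  have hv := congr($hst v)
  simp only [LinearMap.add_apply, LinearMap.smul_apply, smul_eq_mul, hfu, hgv,
    LinearMap.zero_apply, mul_zero, zero_add, add_zero] at hu hv
  exact ⟨(mul_eq_zero.1 hv).resolve_right hfv, (mul_eq_zero.1 hu).resolve_right hgu⟩

lemma finrank_span_pair_of_apply_eq_zero {K M : Type*} [Field K] [AddCommGroup M] [Module K M]
    {f g : Dual K M} {u v : M} (hfu : f u = 0) (hgv : g v = 0) (hfv : f v ≠ 0) (hgu : g u ≠ 0) :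
    finrank K (span K {f, g}) = 2 := by
  have := finrank_span_eq_card (linearIndependent_pair_of_apply_eq_zero hfu hgv hfv hgu)
  rwa [Matrix.range_cons_cons_empty, Fintype.card_fin] at this

section Coadjoint

variable {R L : Type*} [CommRing R] [LieRing L] [LieAlgebra R L]

/-- `coadjointTangent l Y` is the paper's `(ad* Y) l`, the tangent vector at `l` to the
coadjoint orbit of `l`. -/
def coadjointTangent (l : Dual R L) : L →ₗ[R] Dual R L :=
  -(LieAlgebra.ad R L : L →ₗ[R] Module.End R L).compr₂ l

@[simp]
lemma coadjointTangent_apply (l : Dual R L) (Y w : L) :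
    coadjointTangent l Y w = -(l ⁅Y, w⁆) := by
  simp [coadjointTangent]

lemma span_setOf_coadjointTangent (l : Dual R L) (S : Submodule R L) :
    span R {f : Dual R L | ∃ H ∈ S, ∀ w, f w = -(l ⁅H, w⁆)} = S.map (coadjointTangent l) := by
  suffices {f : Dual R L | ∃ H ∈ S, ∀ w, f w = -(l ⁅H, w⁆)} = S.map (coadjointTangent l) by
    rw [this, span_eq]
  ext f
  simp [LinearMap.ext_iff, eq_comm]

lemma span_setOf_coadjointTangent_top (l : Dual R L) :
    span R {f : Dual R L | ∃ Y : L, ∀ w, f w = -(l ⁅Y, w⁆)} =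
      LinearMap.range (coadjointTangent l) := by
  rw [LinearMap.range_eq_map, ← span_setOf_coadjointTangent]
  simp only [mem_top, true_and]

lemma coadjointTangent_eq_zero_of_lie_basis {ι : Type*} (b : Basis ι R L) (l : Dual R L) {Y : L}
    (h : ∀ i, ⁅Y, b i⁆ = 0) : coadjointTangent l Y = 0 :=
  b.ext fun i => by simp [h]

end Coadjoint

theorem stmt_13_general (L : Type) [LieRing L] [LieAlgebra ℝ L]
    (X U V E Z : L) (b : Module.Basis (Fin 5) ℝ L) (hb : ⇑b = ![X, U, V, E, Z])
    (hUV : ⁅U, V⁆ = E) (hXU : ⁅X, U⁆ = V) (hXV : ⁅X, V⁆ = Z)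
    (hXE : ⁅X, E⁆ = 0) (hXZ : ⁅X, Z⁆ = 0) (hUE : ⁅U, E⁆ = 0) (hUZ : ⁅U, Z⁆ = 0)
    (hVE : ⁅V, E⁆ = 0) (hVZ : ⁅V, Z⁆ = 0) (hEZ : ⁅E, Z⁆ = 0)
    (l : L →ₗ[ℝ] ℝ) (hlE : l E = 1) (hlZ : l Z ≠ 0)
    (hOrbit gOrbit : Submodule ℝ (L →ₗ[ℝ] ℝ))
    (hhO : hOrbit = Submodule.span ℝ
      {f : L →ₗ[ℝ] ℝ | ∃ H ∈ Submodule.span ℝ ({X, E} : Set L),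
        ∀ w : L, f w = -(l ⁅H, w⁆)})
    (hgO : gOrbit = Submodule.span ℝ
      {f : L →ₗ[ℝ] ℝ | ∃ Y : L, ∀ w : L, f w = -(l ⁅Y, w⁆)}) :
    Module.finrank ℝ ↥hOrbit = 1 ∧ Module.finrank ℝ ↥gOrbit = 2 ∧
      Module.finrank ℝ ↥gOrbit = 2 * Module.finrank ℝ ↥hOrbit := by
  set φ := coadjointTangent l
  have hφE : φ E = 0 := coadjointTangent_eq_zero_of_lie_basis b l fun i => by
    fin_cases i <;> simp [hb, lie_eq_zero_comm (x := E), hXE, hUE, hVE, hEZ]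
  have hφZ : φ Z = 0 := coadjointTangent_eq_zero_of_lie_basis b l fun i => by
    fin_cases i <;> simp [hb, lie_eq_zero_comm (x := Z), hXZ, hUZ, hVZ, hEZ]
  have hφX : φ X = l Z • φ U - l V • φ V := b.ext fun i => by
    fin_cases i <;> simp [φ, hb, ← lie_skew U X, ← lie_skew V X, ← lie_skew V U, hXU, hXV, hXE,
      hXZ, hUV, hUE, hUZ, hVE, hVZ, hlE, mul_comm (l Z)]
  have hh : hOrbit = span ℝ {φ X} := by
    rw [hhO, span_setOf_coadjointTangent, map_span, Set.image_pair, hφE, Set.pair_comm,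
      span_insert_zero]
  have hg : gOrbit = span ℝ {φ U, φ V} := by
    rw [hgO, span_setOf_coadjointTangent_top]
    refine le_antisymm ?_ (span_le.2 (Set.pair_subset (LinearMap.mem_range_self φ U)
      (LinearMap.mem_range_self φ V)))
    rw [φ.range_le_iff_basis b]
    have hU : φ U ∈ span ℝ {φ U, φ V} := subset_span (by simp)
    have hV : φ V ∈ span ℝ {φ U, φ V} := subset_span (by simp)
    intro i
    fin_cases i <;> simp [hb, hφX, hφE, hφZ, hU, hV, Submodule.sub_mem, Submodule.smul_mem]
  have h1 : finrank ℝ hOrbit = 1 := by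
    rw [hh]
    refine finrank_span_singleton fun h => hlZ ?_
    simpa [φ, hXV] using congr($h V)
  have h2 : finrank ℝ gOrbit = 2 := by
    rw [hg]
    exact finrank_span_pair_of_apply_eq_zero (u := U) (v := V) (by simp [φ]) (by simp [φ])
      (by simp [φ, hUV, hlE]) (by simp [φ, ← lie_skew V U, hUV, hlE])
  exact ⟨h1, h2, by omega⟩

/-- For the Lie algebra `g = span{X,U,V,E,Z}` with brackets `[U,V]=E`, `[X,U]=V`,
`[X,V]=Z`, `h = span{X,E}`, and `l ∈ g*` with `l(E)=1`, `l(X)=0`, `l(Z)≠0`, the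
lagrangian condition holds: `dim(h·l) = 1`, `dim(g·l) = 2`, so
`dim(h·l) = (1/2)·dim(g·l)`, where `h·l` and `g·l` are the spans of the coadjoint
tangent vectors `(ad* Y)l : w ↦ −l([Y,w])`. -/
theorem stmt_13 (L : Type) [LieRing L] [LieAlgebra ℝ L]
    (X U V E Z : L) (b : Module.Basis (Fin 5) ℝ L) (hb : ⇑b = ![X, U, V, E, Z])
    (hUV : ⁅U, V⁆ = E) (hXU : ⁅X, U⁆ = V) (hXV : ⁅X, V⁆ = Z)
    (hXE : ⁅X, E⁆ = 0) (hXZ : ⁅X, Z⁆ = 0) (hUE : ⁅U, E⁆ = 0) (hUZ : ⁅U, Z⁆ = 0)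
    (hVE : ⁅V, E⁆ = 0) (hVZ : ⁅V, Z⁆ = 0) (hEZ : ⁅E, Z⁆ = 0)
    (l : L →ₗ[ℝ] ℝ) (hlE : l E = 1) (hlX : l X = 0) (hlZ : l Z ≠ 0)
    (hOrbit gOrbit : Submodule ℝ (L →ₗ[ℝ] ℝ))
    (hhO : hOrbit = Submodule.span ℝ
      {f : L →ₗ[ℝ] ℝ | ∃ H ∈ Submodule.span ℝ ({X, E} : Set L),
        ∀ w : L, f w = -(l ⁅H, w⁆)})
    (hgO : gOrbit = Submodule.span ℝ
      {f : L →ₗ[ℝ] ℝ | ∃ Y : L, ∀ w : L, f w = -(l ⁅Y, w⁆)}) :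
    Module.finrank ℝ ↥hOrbit = 1 ∧ Module.finrank ℝ ↥gOrbit = 2 ∧
      Module.finrank ℝ ↥gOrbit = 2 * Module.finrank ℝ ↥hOrbit :=
  stmt_13_general L X U V E Z b hb hUV hXU hXV hXE hXZ hUE hUZ hVE hVZ hEZ l hlE hlZ hOrbit gOrbit
    hhO hgO
end

section
/- In the Lie algebra g with basis {X,U,V,E,Z} and brackets [U,V]=E, [X,U]=V, [X,V]=Z, the algebra of H-invariant polynomials S(q)^h, where q = span{Z,U,V} and the h = span{X,E}-action is the quotient coadjoint action, is the polynomial algebra generated by Z and 2ZU − V²: a polynomial P(Z,U,V) satisfies X·P = 0 (where X acts by the derivation V∂_U + Z∂_V induced from the coadjoint action modulo h⊥-translations with λ(E)=1) if and only if P ∈ ℝ[Z, 2ZU − V²]. -/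
/-!
After inverting `Z`, the polynomial ring `K[Z, U, V]` has the coordinates `Z, W, V` with
`W = 2ZU - V²`, and in them the derivation `D = V∂_U + Z∂_V` is `Z ∂_V`; so its kernel
ought to be `K[Z, W]`. Concretely, with `S = K[Z, W]`: since `ZU = (W + V²)/2`, some
`Z^N P` is `q(V)` for a polynomial `q` over `S`, and `D (q(V)) = Z q'(V)`. As `V` is
transcendental over `S` (substitute `U ↦ (W + V²)/(2Z)` in the fraction field of `S[V]`),
`D P = 0` forces `q' = 0`, so `Z^N P ∈ S`. Finally `Z s ∈ S` implies `s ∈ S`: modulo `Z`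
the generator `W` becomes `-V²`, which is transcendental over `K`.
-/

open MvPolynomial

theorem Derivation.map_aeval_of_forall_mem_eq_zero {R B : Type*} [CommRing R] [CommRing B]
    [Algebra R B] (d : Derivation R B B) {S : Subalgebra R B} (hS : ∀ s ∈ S, d s = 0) (x : B)
    (q : Polynomial S) :
    d (Polynomial.aeval x q) = Polynomial.aeval x (Polynomial.derivative q) * d x := by
  induction q using Polynomial.induction_on' with
  | add p q hp hq => simp only [map_add, hp, hq, add_mul]
  | monomial n s =>
    simp [Polynomial.aeval_monomial, Polynomial.derivative_monomial, Derivation.leibniz_pow,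
      hS s s.2]
    ring

theorem Algebra.exists_pow_mul_mem_of_mem_adjoin {R A : Type*} [CommSemiring R] [CommSemiring A]
    [Algebra R A] {T : Subalgebra R A} {s : Set A} {z : A} (hz : z ∈ T)
    (hs : ∀ x ∈ s, ∃ n, z ^ n * x ∈ T) {a : A} (ha : a ∈ Algebra.adjoin R s) :
    ∃ n, z ^ n * a ∈ T := by
  induction ha using Algebra.adjoin_induction with
  | mem x hx => exact hs x hx
  | algebraMap r => exact ⟨0, by simp [T.algebraMap_mem r]⟩
  | add x y _ _ hx hy =>
    obtain ⟨n, hn⟩ := hx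
    obtain ⟨m, hm⟩ := hy
    refine ⟨n + m, ?_⟩
    convert add_mem (mul_mem (pow_mem hz m) hn) (mul_mem (pow_mem hz n) hm) using 1
    ring
  | mul x y _ _ hx hy =>
    obtain ⟨n, hn⟩ := hx
    obtain ⟨m, hm⟩ := hy
    exact ⟨n + m, by convert mul_mem hn hm using 1; ring⟩

section InvariantsOfX

variable (K : Type*) [Field K]

local notation "𝔸" => MvPolynomial (Fin 3) K

-- Coordinates on `S(q) = K[Z, U, V]`: `X 0 = Z`, `X 1 = U`, `X 2 = V`.
noncomputable def quadInvariant : 𝔸 := C 2 * (X 0 * X 1) - X 2 ^ 2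

noncomputable def xDerivation : Derivation K 𝔸 𝔸 :=
  (X 2 : 𝔸) • pderiv 1 + (X 0 : 𝔸) • pderiv 2

noncomputable abbrev invariantSubalgebra : Subalgebra K 𝔸 :=
  Algebra.adjoin K {X 0, quadInvariant K}

variable {K}

local notation "𝕊" => invariantSubalgebra K

theorem xDerivation_apply (P : 𝔸) :
    xDerivation K P = X 2 * pderiv 1 P + X 0 * pderiv 2 P := by
  simp [xDerivation]

@[simp]
theorem xDerivation_X_zero : xDerivation K (X 0) = 0 := by
  simp [xDerivation_apply]

@[simp]
theorem xDerivation_X_one : xDerivation K (X 1) = X 2 := by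
  simp [xDerivation_apply]

@[simp]
theorem xDerivation_X_two : xDerivation K (X 2) = X 0 := by
  simp [xDerivation_apply]

@[simp]
theorem xDerivation_quadInvariant : xDerivation K (quadInvariant K) = 0 := by
  simp only [quadInvariant, map_sub, Derivation.leibniz, Derivation.leibniz_pow, derivation_C,
    xDerivation_X_zero, xDerivation_X_one, xDerivation_X_two, smul_eq_mul, nsmul_eq_mul]
  rw [map_ofNat C 2]
  ring

theorem X_zero_mem_invariantSubalgebra : (X 0 : 𝔸) ∈ 𝕊 :=
  Algebra.subset_adjoin (Set.mem_insert _ _)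

theorem quadInvariant_mem_invariantSubalgebra : quadInvariant K ∈ 𝕊 :=
  Algebra.subset_adjoin (Set.mem_insert_of_mem _ rfl)

theorem xDerivation_eq_zero_of_mem {P : 𝔸} (hP : P ∈ 𝕊) : xDerivation K P = 0 := by
  refine (xDerivation K).eqOn_adjoin (D2 := 0) ?_ hP
  rintro _ (rfl | rfl) <;> simp

theorem xDerivation_aeval_X_two (q : Polynomial 𝕊) :
    xDerivation K (Polynomial.aeval (X 2) q) =
      Polynomial.aeval (X 2) (Polynomial.derivative q) * X 0 := by
  rw [(xDerivation K).map_aeval_of_forall_mem_eq_zero (fun _ => xDerivation_eq_zero_of_mem),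
    xDerivation_X_two]

theorem transcendental_X_two [CharZero K] : Transcendental 𝕊 (X 2 : 𝔸) := by
  let F := FractionRing (Polynomial 𝕊)
  let c : 𝕊 →+* F := (algebraMap (Polynomial 𝕊) F).comp Polynomial.C
  let z : 𝕊 := ⟨X 0, X_zero_mem_invariantSubalgebra⟩
  let w : 𝕊 := ⟨quadInvariant K, quadInvariant_mem_invariantSubalgebra⟩
  let y : F := algebraMap (Polynomial 𝕊) F Polynomial.X
  have hz : c z ≠ 0 := by
    have hz0 : z ≠ 0 := fun h => X_ne_zero (R := K) (0 : Fin 3) (congrArg Subtype.val h)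
    exact (map_ne_zero_iff (algebraMap (Polynomial 𝕊) F)
      (IsFractionRing.injective (Polynomial 𝕊) F)).2 (Polynomial.C_ne_zero.2 hz0)
  let ψ : 𝔸 →+* F :=
    eval₂Hom (c.comp (algebraMap K 𝕊)) ![c z, (c w + y ^ 2) / (2 * c z), y]
  have hψS : ∀ s : 𝕊, ψ s = c s := by
    rintro ⟨s, hs⟩
    induction hs using Algebra.adjoin_induction with
    | mem x hx =>
      rcases hx with rfl | rfl
      · simp [ψ, z]
      · change ψ (C 2 * (X 0 * X 1) - X 2 ^ 2) = c w
        simp only [ψ, map_sub, map_mul, map_pow, eval₂Hom_X', map_ofNat, Matrix.cons_val]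
        rw [← mul_assoc, mul_div_cancel₀ _ (mul_ne_zero two_ne_zero hz), add_sub_cancel_right]
    | algebraMap r => simp only [ψ, algebraMap_eq, eval₂Hom_C, RingHom.comp_apply]; rfl
    | add x y hx hy ihx ihy => rw [map_add, ihx, ihy, ← map_add]; rfl
    | mul x y hx hy ihx ihy => rw [map_mul, ihx, ihy, ← map_mul]; rfl
  have hψ : ψ.comp (Polynomial.aeval (X 2 : 𝔸) : Polynomial 𝕊 →ₐ[𝕊] 𝔸).toRingHom =
      algebraMap (Polynomial 𝕊) F := by
    apply Polynomial.ringHom_ext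
    · intro s
      simpa [c] using hψS s
    · simp [ψ, y]
  rw [transcendental_iff_injective]
  refine Function.Injective.of_comp (f := ψ) ?_
  have hcomp : ⇑ψ ∘ ⇑(Polynomial.aeval (X 2 : 𝔸)) = algebraMap (Polynomial 𝕊) F :=
    congrArg DFunLike.coe hψ
  rw [hcomp]
  exact IsFractionRing.injective (Polynomial 𝕊) F

theorem exists_aeval_X_two_eq_X_zero_pow_mul [CharZero K] (P : 𝔸) :
    ∃ (N : ℕ) (q : Polynomial 𝕊), Polynomial.aeval (X 2) q = X 0 ^ N * P := by
  let T : Subalgebra K 𝔸 := (Algebra.adjoin 𝕊 {(X 2 : 𝔸)}).restrictScalars K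
  have hS : ∀ s ∈ 𝕊, s ∈ T := fun s hs => Subalgebra.algebraMap_mem _ (⟨s, hs⟩ : 𝕊)
  have hV : (X 2 : 𝔸) ∈ T :=
    (Subalgebra.mem_restrictScalars K).2 (Algebra.self_mem_adjoin_singleton 𝕊 _)
  have hZU : (X 0 * X 1 : 𝔸) = C 2⁻¹ * (quadInvariant K + X 2 ^ 2) := by
    rw [quadInvariant, sub_add_cancel, ← mul_assoc, ← map_mul,
      inv_mul_cancel₀ (two_ne_zero : (2 : K) ≠ 0), map_one, one_mul]
  have hgen : ∀ i : Fin 3, ∃ n, (X 0 : 𝔸) ^ n * X i ∈ T := by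
    intro i
    fin_cases i
    · exact ⟨0, by simpa using hS _ X_zero_mem_invariantSubalgebra⟩
    · refine ⟨1, ?_⟩
      change (X 0 : 𝔸) ^ 1 * X 1 ∈ T
      rw [pow_one, hZU]
      exact mul_mem (Subalgebra.algebraMap_mem T _)
        (add_mem (hS _ quadInvariant_mem_invariantSubalgebra) (pow_mem hV 2))
    · exact ⟨0, by simpa using hV⟩
  have hP : P ∈ Algebra.adjoin K (Set.range X) := by
    rw [adjoin_range_X]
    trivial
  obtain ⟨N, hN⟩ := Algebra.exists_pow_mul_mem_of_mem_adjoin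
    (hS _ X_zero_mem_invariantSubalgebra) (Set.forall_mem_range.2 hgen) hP
  rw [Subalgebra.mem_restrictScalars, Algebra.adjoin_singleton_eq_range_aeval] at hN
  exact ⟨N, (AlgHom.mem_range _).1 hN⟩

theorem exists_eq_X_zero_mul_add_of_mem {s : 𝔸} (hs : s ∈ 𝕊) :
    ∃ a ∈ 𝕊, ∃ b ∈ Algebra.adjoin K {quadInvariant K}, s = X 0 * a + b := by
  have hle : Algebra.adjoin K {quadInvariant K} ≤ 𝕊 :=
    Algebra.adjoin_mono (Set.subset_insert _ _)
  induction hs using Algebra.adjoin_induction with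
  | mem x hx =>
    rcases hx with rfl | rfl
    · exact ⟨1, one_mem _, 0, zero_mem _, by ring⟩
    · exact ⟨0, zero_mem _, _, Algebra.self_mem_adjoin_singleton K _, by ring⟩
  | algebraMap r => exact ⟨0, zero_mem _, _, Subalgebra.algebraMap_mem _ r, by ring⟩
  | add x y _ _ hx hy =>
    obtain ⟨a, ha, b, hb, rfl⟩ := hx
    obtain ⟨a', ha', b', hb', rfl⟩ := hy
    exact ⟨a + a', add_mem ha ha', b + b', add_mem hb hb', by ring⟩
  | mul x y _ _ hx hy =>
    obtain ⟨a, ha, b, hb, rfl⟩ := hx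
    obtain ⟨a', ha', b', hb', rfl⟩ := hy
    refine ⟨X 0 * a * a' + a * b' + b * a', ?_, b * b', mul_mem hb hb', by ring⟩
    have hZ := X_zero_mem_invariantSubalgebra (K := K)
    exact add_mem (add_mem (mul_mem (mul_mem hZ ha) ha') (mul_mem ha (hle hb')))
      (mul_mem (hle hb) ha')

theorem eq_zero_of_mem_adjoin_quadInvariant_of_X_zero_dvd {b : 𝔸}
    (hb : b ∈ Algebra.adjoin K {quadInvariant K}) (hdvd : X 0 ∣ b) : b = 0 := by
  let ε : 𝔸 →ₐ[K] Polynomial K := aeval ![0, 0, Polynomial.X]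
  rw [Algebra.adjoin_singleton_eq_range_aeval] at hb
  obtain ⟨p, rfl⟩ := hb
  obtain ⟨c, hc⟩ := hdvd
  simp only [AlgHom.toRingHom_eq_coe, RingHom.coe_coe] at hc ⊢
  have hε : ε (quadInvariant K) = -Polynomial.X ^ 2 := by
    simp [ε, quadInvariant]
  have htr : Transcendental K (-Polynomial.X ^ 2 : Polynomial K) :=
    Polynomial.transcendental _ (by simp) (mem_nonZeroDivisors_of_ne_zero (by simp))
  have hp : Polynomial.aeval (-Polynomial.X ^ 2 : Polynomial K) p = 0 := by
    rw [← hε, Polynomial.aeval_algHom_apply, hc]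
    simp [ε]
  simp [transcendental_iff.1 htr p hp]

theorem mem_of_X_zero_mul_mem {P : 𝔸} (h : X 0 * P ∈ 𝕊) : P ∈ 𝕊 := by
  obtain ⟨a, ha, b, hb, hab⟩ := exists_eq_X_zero_mul_add_of_mem h
  have hb0 : b = 0 :=
    eq_zero_of_mem_adjoin_quadInvariant_of_X_zero_dvd hb ⟨P - a, by rw [mul_sub, hab]; ring⟩
  rw [hb0, add_zero] at hab
  rwa [mul_left_cancel₀ (X_ne_zero 0) hab]

theorem mem_of_X_zero_pow_mul_mem {P : 𝔸} {N : ℕ} (h : X 0 ^ N * P ∈ 𝕊) : P ∈ 𝕊 := by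
  induction N with
  | zero => simpa using h
  | succ N ih => exact ih (mem_of_X_zero_mul_mem (by rwa [← mul_assoc, ← pow_succ']))

end InvariantsOfX

/-- For the Lie algebra `g = span{X,U,V,E,Z}` with brackets `[U,V]=E`, `[X,U]=V`,
`[X,V]=Z`, `h = span{X,E}`, `λ = E*`, `q = span{Z,U,V}`, identify `S(q) ≅ ℝ[Z,U,V]`
(coordinates: variable `0 = Z`, `1 = U`, `2 = V`); the generator `X` of `h` acts on
`ℝ[Z,U,V]` by the derivation `D = V∂_U + Z∂_V` (and `E` acts trivially).  Then the
invariant algebra `S(q)^h = ker D` is exactly the polynomial algebra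
`ℝ[Z, 2ZU − V²]`: a polynomial `P` satisfies `X·P = 0` iff `P ∈ ℝ[Z, 2ZU − V²]`. -/
theorem stmt_14 (D : MvPolynomial (Fin 3) ℝ → MvPolynomial (Fin 3) ℝ)
    (hD : ∀ P, D P = X 2 * pderiv (1 : Fin 3) P + X 0 * pderiv (2 : Fin 3) P) :
    ∀ P : MvPolynomial (Fin 3) ℝ,
      D P = 0 ↔
        P ∈ Algebra.adjoin ℝ
          ({X 0, C 2 * (X 0 * X 1) - (X 2) ^ 2} : Set (MvPolynomial (Fin 3) ℝ)) := by
  obtain rfl : D = xDerivation ℝ := funext fun P => by rw [hD, xDerivation_apply]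
  intro P
  refine ⟨fun hP => ?_, xDerivation_eq_zero_of_mem⟩
  obtain ⟨N, q, hq⟩ := exists_aeval_X_two_eq_X_zero_pow_mul P
  have hker :
      Polynomial.aeval (X 2 : MvPolynomial (Fin 3) ℝ) (Polynomial.derivative q) * X 0 = 0 := by
    rw [← xDerivation_aeval_X_two, hq, Derivation.leibniz, hP]
    simp [Derivation.leibniz_pow]
  have hq' : Polynomial.derivative q = 0 :=
    transcendental_iff.1 transcendental_X_two _ ((mul_eq_zero.1 hker).resolve_right (X_ne_zero 0))
  refine mem_of_X_zero_pow_mul_mem (N := N) ?_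
  rw [← hq, Polynomial.eq_C_of_derivative_eq_zero hq', Polynomial.aeval_C]
  exact (q.coeff 0).2
end

section
/- Let D = V∂_U + Z∂_V be a derivation on ℝ[Z,U,V]. Then ker D = ℝ[Z, 2ZU − V²]. -/
/-!
`Z` and `W = 2ZU - V²` are killed by `D`. Conversely, `V` is a local slice (`D V = Z`, `D Z = 0`),
so the flow `exp (t D)` fixes every `P ∈ ker D`, and evaluating it at `t = -V / Z` gives
`P(Z, U, V) = P(Z, U - V² / (2Z), 0)`. To stay inside polynomials, first apply the injective
blow-up chart `δ : (Z, U, V) ↦ (Z, ZU, ZV)`; this gives `δ P = G(Z, ZV² - 2ZU)` with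
`G(a, b) = P(a, -b/2, 0)`. Setting `U = 0, V = b` shows that `G(a, ab²)` lies in the image of the
chart `(a, b) ↦ (a, ab)`, i.e. every monomial `aⁱ bʲ` of `G` has `j ≤ i`. Hence `G = H(a, ab)`,
so `δ P = δ (H(Z, -W))` and `P = H(Z, -W)`.
-/

open MvPolynomial

noncomputable section

namespace MvPolynomial

variable {σ τ R : Type*} [CommSemiring R]

section MapExponents

variable (f : (σ →₀ ℕ) →+ (τ →₀ ℕ))

def mapExponents : MvPolynomial σ R →ₐ[R] MvPolynomial τ R :=
  AddMonoidAlgebra.mapDomainAlgHom R R f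

@[simp]
lemma mapExponents_monomial (m : σ →₀ ℕ) (r : R) :
    mapExponents f (monomial m r) = monomial (f m) r := by
  simp [mapExponents, monomial]

variable {f}

lemma coeff_mapExponents (hf : Function.Injective f) (p : MvPolynomial σ R) (m : σ →₀ ℕ) :
    coeff (f m) (mapExponents f p) = coeff m p :=
  Finsupp.mapDomain_apply hf _ _

lemma mapExponents_injective (hf : Function.Injective f) :
    Function.Injective (mapExponents f : MvPolynomial σ R → MvPolynomial τ R) :=
  AddMonoidAlgebra.mapDomain_injective hf

lemma support_mapExponents_subset [DecidableEq τ] (p : MvPolynomial σ R) :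
    (mapExponents f p).support ⊆ p.support.image f :=
  Finsupp.mapDomain_support

lemma mem_range_mapExponents (hf : Function.Injective f) {q : MvPolynomial τ R}
    (hq : ↑q.support ⊆ Set.range f) : q ∈ (mapExponents f (R := R)).range :=
  ⟨_, AddMonoidAlgebra.mapDomain_comapDomain hq hf⟩

end MapExponents

section BlowupChart

variable [DecidableEq σ] (i₀ : σ)

def offDegree : (σ →₀ ℕ) →+ ℕ := Finsupp.weight fun i => if i = i₀ then 0 else 1

@[simp]
lemma offDegree_single (i : σ) (k : ℕ) :
    offDegree i₀ (Finsupp.single i k) = if i = i₀ then 0 else k := by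
  simp [offDegree, Finsupp.weight_single]

lemma offDegree_fin_two (m : Fin 2 →₀ ℕ) : offDegree 0 m = m 1 := by
  simp [offDegree, Finsupp.weight_apply, Finsupp.sum_fintype]

def blowupExponent : (σ →₀ ℕ) →+ (σ →₀ ℕ) :=
  AddMonoidHom.id _ + (Finsupp.singleAddHom i₀).comp (offDegree i₀)

lemma blowupExponent_apply (m : σ →₀ ℕ) :
    blowupExponent i₀ m = m + Finsupp.single i₀ (offDegree i₀ m) := rfl

lemma offDegree_blowupExponent (m : σ →₀ ℕ) :
    offDegree i₀ (blowupExponent i₀ m) = offDegree i₀ m := by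
  simp [blowupExponent_apply]

lemma blowupExponent_injective : Function.Injective (blowupExponent i₀) := by
  intro m m' h
  have hdeg : offDegree i₀ m = offDegree i₀ m' := by
    rw [← offDegree_blowupExponent, h, offDegree_blowupExponent]
  rw [blowupExponent_apply, blowupExponent_apply, hdeg] at h
  exact add_right_cancel h

lemma mem_range_blowupExponent_iff (n : σ →₀ ℕ) :
    n ∈ Set.range (blowupExponent i₀) ↔ offDegree i₀ n ≤ n i₀ := by
  constructor
  · rintro ⟨m, rfl⟩
    simp [blowupExponent_apply]
  · intro h
    have hle : Finsupp.single i₀ (offDegree i₀ n) ≤ n := Finsupp.single_le_iff.mpr h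
    have hdeg : offDegree i₀ (n - Finsupp.single i₀ (offDegree i₀ n)) = offDegree i₀ n := by
      conv_rhs => rw [← tsub_add_cancel_of_le hle]
      simp
    exact ⟨n - Finsupp.single i₀ (offDegree i₀ n), by
      rw [blowupExponent_apply, hdeg, tsub_add_cancel_of_le hle]⟩

/-- The chart `X i ↦ X i₀ * X i` (`i ≠ i₀`) of the blow-up of the origin. -/
def blowupChart : MvPolynomial σ R →ₐ[R] MvPolynomial σ R :=
  mapExponents (blowupExponent i₀)

lemma blowupChart_X_self : blowupChart (R := R) i₀ (X i₀) = X i₀ := by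
  simp [blowupChart, X, blowupExponent_apply]

lemma blowupChart_X_of_ne {i : σ} (hi : i ≠ i₀) :
    blowupChart (R := R) i₀ (X i) = X i₀ * X i := by
  simp [blowupChart, X, blowupExponent_apply, hi, monomial_mul, add_comm]

lemma blowupChart_injective : Function.Injective (blowupChart (R := R) i₀) :=
  mapExponents_injective (blowupExponent_injective i₀)

lemma mem_range_blowupChart_iff (q : MvPolynomial σ R) :
    q ∈ (blowupChart (R := R) i₀).range ↔ ∀ n ∈ q.support, offDegree i₀ n ≤ n i₀ := by
  simp_rw [← mem_range_blowupExponent_iff]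
  refine ⟨?_, mem_range_mapExponents (blowupExponent_injective i₀)⟩
  rintro ⟨p, rfl⟩ n hn
  obtain ⟨m, -, rfl⟩ := Finset.mem_image.mp (support_mapExponents_subset p hn)
  exact ⟨m, rfl⟩

end BlowupChart

lemma mem_range_blowupChart_of_aeval_sq {G : MvPolynomial (Fin 2) R}
    (hG : aeval ![X 0, X 0 * X 1 ^ 2] G ∈ (blowupChart (R := R) (0 : Fin 2)).range) :
    G ∈ (blowupChart (R := R) (0 : Fin 2)).range := by
  -- `aⁱ bʲ ↦ aⁱ⁺ʲ b²ʲ`, which lies in the chart iff `j ≤ i`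
  let φ : (Fin 2 →₀ ℕ) →+ (Fin 2 →₀ ℕ) :=
    blowupExponent 0 + (Finsupp.singleAddHom 1).comp (Finsupp.applyAddHom 1)
  have hφ : aeval ![X 0, X 0 * X 1 ^ 2] = mapExponents (R := R) φ := by
    ext i : 1
    fin_cases i <;> simp only [aeval_X] <;>
      simp [φ, X, blowupExponent_apply, monomial_mul, monomial_pow, add_comm]
    congr 2
    ext j; fin_cases j <;> simp
  have hφ_inj : Function.Injective φ := by
    intro m m' h
    have h0 := congrArg (· 0) h
    have h1 := congrArg (· 1) h
    simp [φ, blowupExponent_apply, offDegree_fin_two] at h0 h1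
    ext j; fin_cases j <;> simp <;> omega
  rw [hφ, mem_range_blowupChart_iff] at hG
  rw [mem_range_blowupChart_iff]
  intro m hm
  have hφm : φ m ∈ (mapExponents φ G).support := by
    rw [mem_support_iff, coeff_mapExponents hφ_inj]
    exact mem_support_iff.mp hm
  simpa [φ, blowupExponent_apply, offDegree_fin_two] using hG (φ m) hφm

variable {A : Type*} [CommSemiring A] [Algebra R A]

lemma aeval_mem_adjoin {s : Set A} {f : σ → A} (hf : ∀ i, f i ∈ Algebra.adjoin R s)
    (p : MvPolynomial σ R) : aeval f p ∈ Algebra.adjoin R s :=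
  Algebra.adjoin_le (Set.range_subset_iff.2 hf) (Algebra.adjoin_range_eq_range_aeval R f ▸ ⟨p, rfl⟩)

lemma derivative_algHom_eq_of_X (D : Derivation R (MvPolynomial σ R) (MvPolynomial σ R))
    (Θ : MvPolynomial σ R →ₐ[R] Polynomial (MvPolynomial σ R))
    (h : ∀ i, Polynomial.derivative (Θ (X i)) = Θ (D (X i))) (p : MvPolynomial σ R) :
    Polynomial.derivative (Θ p) = Θ (D p) := by
  induction p using MvPolynomial.induction_on with
  | C a =>
    rw [← algebraMap_eq, AlgHom.commutes, D.map_algebraMap, map_zero]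
    simp [Polynomial.algebraMap_apply]
  | add p q hp hq => rw [map_add, Polynomial.derivative_add, hp, hq, map_add, map_add]
  | mul_X p i hp =>
    rw [map_mul, Polynomial.derivative_mul, hp, h, Derivation.leibniz, map_add, smul_eq_mul,
      smul_eq_mul, map_mul, map_mul]
    ring

lemma C_inv_two_mul_two {K : Type*} [Field K] [CharZero K] :
    (C 2⁻¹ : MvPolynomial σ K) * 2 = 1 := by
  rw [← map_ofNat C 2, ← map_mul, inv_mul_cancel₀ two_ne_zero, map_one]

end MvPolynomial

namespace Derivation

variable {R A : Type*} [CommSemiring R] [CommSemiring A] [Algebra R A]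

lemma eq_zero_of_mem_adjoin (D : Derivation R A A) {s : Set A} (hs : ∀ x ∈ s, D x = 0)
    {a : A} (ha : a ∈ Algebra.adjoin R s) : D a = 0 := by
  induction ha using Algebra.adjoin_induction with
  | mem x hx => exact hs x hx
  | algebraMap r => exact D.map_algebraMap r
  | add x y _ _ hx hy => rw [map_add, hx, hy, add_zero]
  | mul x y _ _ hx hy => rw [leibniz, hx, hy, smul_zero, smul_zero, add_zero]

lemma flow_eq_C_of_apply_eq_zero [IsAddTorsionFree A] (D : Derivation R A A)
    (Θ : A →ₐ[R] Polynomial A) (hΘ : ∀ a, Polynomial.derivative (Θ a) = Θ (D a))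
    (h0 : ∀ a, (Θ a).eval 0 = a) {a : A} (ha : D a = 0) : Θ a = Polynomial.C a := by
  have hconst := Polynomial.eq_C_of_derivative_eq_zero (by rw [hΘ, ha, map_zero])
  rwa [Polynomial.coeff_zero_eq_eval_zero, h0] at hconst

end Derivation

namespace Weitzenbock

variable (K : Type*) [Field K]

/-- `V ∂_U + Z ∂_V`, where `Z, U, V` are `X 0, X 1, X 2`. -/
def D : Derivation K (MvPolynomial (Fin 3) K) (MvPolynomial (Fin 3) K) :=
  (X 2 : MvPolynomial (Fin 3) K) • pderiv 1 + (X 0 : MvPolynomial (Fin 3) K) • pderiv 2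

/-- `exp (t D)`. -/
def flow : MvPolynomial (Fin 3) K →ₐ[K] Polynomial (MvPolynomial (Fin 3) K) :=
  aeval ![Polynomial.C (X 0),
    Polynomial.C (X 1) + Polynomial.C (X 2) * Polynomial.X +
      Polynomial.C (C 2⁻¹ * X 0) * Polynomial.X ^ 2,
    Polynomial.C (X 2) + Polynomial.C (X 0) * Polynomial.X]

variable {K}

lemma D_apply (P : MvPolynomial (Fin 3) K) : D K P = X 2 * pderiv 1 P + X 0 * pderiv 2 P := rfl

lemma D_X (i : Fin 3) : D K (X i) = ![0, X 2, X 0] i := by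
  fin_cases i <;> simp [D_apply, pderiv_X]

lemma D_invariant : D K (C 2 * (X 0 * X 1) - X 2 ^ 2) = 0 := by
  simp [D_apply, pderiv_X]
  rw [map_ofNat C 2]
  ring

lemma derivative_flow [CharZero K] (P : MvPolynomial (Fin 3) K) :
    Polynomial.derivative (flow K P) = flow K (D K P) := by
  refine derivative_algHom_eq_of_X _ _ (fun i => ?_) P
  have h2 : (Polynomial.C (C 2⁻¹) : Polynomial (MvPolynomial (Fin 3) K)) * 2 = 1 := by
    rw [← map_ofNat Polynomial.C 2, ← map_mul, C_inv_two_mul_two, map_one]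
  fin_cases i <;> simp [flow, D_X]
  linear_combination Polynomial.C (X 0) * Polynomial.X * h2

lemma eval_zero_flow (P : MvPolynomial (Fin 3) K) : (flow K P).eval 0 = P := by
  have h : ((Polynomial.aeval (0 : MvPolynomial (Fin 3) K)).restrictScalars K).comp (flow K) =
      AlgHom.id K _ := by
    ext i : 1
    fin_cases i <;> simp [flow]
  simpa using congr($h P)

lemma flow_eq_C [CharZero K] {P : MvPolynomial (Fin 3) K} (hP : D K P = 0) :
    flow K P = Polynomial.C P :=
  (D K).flow_eq_C_of_apply_eq_zero (flow K) derivative_flow eval_zero_flow hP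

variable (K) in
def toSlice : MvPolynomial (Fin 3) K →ₐ[K] MvPolynomial (Fin 2) K :=
  aeval ![X 0, -(C 2⁻¹ * X 1), 0]

variable (K) in
def ofSlice : MvPolynomial (Fin 2) K →ₐ[K] MvPolynomial (Fin 3) K :=
  aeval ![X 0, X 0 * X 2 ^ 2 - C 2 * (X 0 * X 1)]

/-- The flow evaluated at `t = -V / Z`, made polynomial by the blow-up chart. -/
lemma blowupChart_eq_ofSlice_toSlice [CharZero K] {P : MvPolynomial (Fin 3) K}
    (hP : D K P = 0) : blowupChart 0 P = ofSlice K (toSlice K P) := by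
  let evalSlice := Polynomial.aevalTower (blowupChart (R := K) (0 : Fin 3)) (-X 2)
  have hslice : evalSlice.comp (flow K) = (ofSlice K).comp (toSlice K) := by
    ext i : 1
    fin_cases i <;>
      simp [evalSlice, flow, ofSlice, toSlice, blowupChart_X_self, blowupChart_X_of_ne]
    rw [map_ofNat C 2]
    linear_combination (X 0 * X 2 ^ 2 - X 0 * X 1) * (C_inv_two_mul_two (K := K))
  calc blowupChart 0 P = evalSlice (Polynomial.C P) := by simp [evalSlice]
    _ = _ := by rw [← flow_eq_C hP]; exact congr($hslice P)

lemma toSlice_mem_range_blowupChart [CharZero K] {P : MvPolynomial (Fin 3) K}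
    (hP : D K P = 0) : toSlice K P ∈ (blowupChart (R := K) (0 : Fin 2)).range := by
  let killU : MvPolynomial (Fin 3) K →ₐ[K] MvPolynomial (Fin 2) K := aeval ![X 0, 0, X 1]
  have hkillU : killU.comp (blowupChart 0) = (blowupChart 0).comp killU := by
    ext i : 1
    fin_cases i <;> simp [killU, blowupChart_X_self, blowupChart_X_of_ne]
  have hkillU_ofSlice : killU.comp (ofSlice K) = aeval ![X 0, X 0 * X 1 ^ 2] := by
    ext i : 1
    fin_cases i <;> simp [killU, ofSlice]
  refine mem_range_blowupChart_of_aeval_sq ⟨killU P, ?_⟩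
  rw [← hkillU_ofSlice, AlgHom.comp_apply, ← blowupChart_eq_ofSlice_toSlice hP,
    ← AlgHom.comp_apply, hkillU]
  rfl

lemma ofSlice_comp_blowupChart :
    (ofSlice K).comp (blowupChart 0) =
      (blowupChart 0).comp (aeval ![X 0, -(C 2 * (X 0 * X 1) - X 2 ^ 2)]) := by
  ext i : 1
  fin_cases i <;> simp [ofSlice, blowupChart_X_self, blowupChart_X_of_ne]
  ring

lemma mem_adjoin_of_D_eq_zero [CharZero K] {P : MvPolynomial (Fin 3) K} (hP : D K P = 0) :
    P ∈ Algebra.adjoin K {X 0, C 2 * (X 0 * X 1) - X 2 ^ 2} := by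
  obtain ⟨H, hH⟩ := toSlice_mem_range_blowupChart hP
  have hPH : P = aeval ![X 0, -(C 2 * (X 0 * X 1) - X 2 ^ 2)] H := by
    apply blowupChart_injective (0 : Fin 3)
    rw [blowupChart_eq_ofSlice_toSlice hP, ← hH]
    exact congr($ofSlice_comp_blowupChart H)
  rw [hPH]
  refine aeval_mem_adjoin (fun i => ?_) H
  fin_cases i
  exacts [Algebra.subset_adjoin (by simp), neg_mem (Algebra.subset_adjoin (by simp))]

theorem D_eq_zero_iff_mem_adjoin [CharZero K] (P : MvPolynomial (Fin 3) K) :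
    D K P = 0 ↔ P ∈ Algebra.adjoin K {X 0, C 2 * (X 0 * X 1) - X 2 ^ 2} := by
  refine ⟨mem_adjoin_of_D_eq_zero, (D K).eq_zero_of_mem_adjoin ?_⟩
  rintro x (rfl | rfl)
  exacts [D_X 0, D_invariant]

end Weitzenbock

end

/-- Let `D = V∂_U + Z∂_V` be the derivation on `ℝ[Z,U,V]` with `D(U)=V`, `D(V)=Z`,
`D(Z)=0` (coordinates: variable `0 = Z`, `1 = U`, `2 = V`).  Then
`ker D = ℝ[Z, 2ZU − V²]`, the subalgebra generated by `Z` and `2ZU − V²`. -/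
theorem stmt_15 :
    ∀ P : MvPolynomial (Fin 3) ℝ,
      X 2 * pderiv (1 : Fin 3) P + X 0 * pderiv (2 : Fin 3) P = 0 ↔
        P ∈ Algebra.adjoin ℝ
          ({X 0, C 2 * (X 0 * X 1) - (X 2) ^ 2} : Set (MvPolynomial (Fin 3) ℝ)) :=
  Weitzenbock.D_eq_zero_iff_mem_adjoin
end
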